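/- arXiv:2407.21014 — 5 statements merged into one kernel-verified Lean document; each statement's English description precedes it below -/
import Mathlib

section
/- Let p ∈ [1,2] and let X₁,…,Xₙ be independent real random variables, each centered (E[Xᵢ] = 0) and in Lᵖ. Then E[|∑_{k=1}^n X_k|^p] ≤ 2 ∑_{k=1}^n E[|X_k|^p]. -/
open MeasureTheory ProbabilityTheory

lemma vbe_tangent {p : ℝ} (hp : 1 ≤ p) {d s : ℝ} (hd : 0 < d) (hs : -d ≤ s) :
    d ^ p + p * d ^ (p - 1) * s ≤ (d + s) ^ p := by
  have hsd : -1 ≤ s / d := by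
    rw [neg_le, ← neg_div]
    exact div_le_one_of_le₀ (by linarith) hd.le
  have hber := one_add_mul_self_le_rpow_one_add hsd hp
  have hmul := mul_le_mul_of_nonneg_right hber (Real.rpow_nonneg hd.le p)
  have h1 : (1 + s / d) ^ p * d ^ p = (d + s) ^ p := by
    rw [← Real.mul_rpow (by linarith) hd.le]
    congr 1
    field_simp
  have h2 : (1 + p * (s / d)) * d ^ p = d ^ p + p * d ^ (p - 1) * s := by
    have hdp : d ^ p = d ^ (p - 1) * d := by
      rw [← Real.rpow_add_one hd.ne' (p - 1)]
      ring_nf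
    rw [hdp]
    field_simp
  rw [h1, h2] at hmul
  exact hmul

lemma vbe_subadd {q : ℝ} (hq0 : 0 ≤ q) (hq1 : q ≤ 1) {a b : ℝ} (ha : 0 ≤ a) (hb : 0 ≤ b) :
    (a + b) ^ q ≤ a ^ q + b ^ q := by
  have h := NNReal.rpow_add_le_add_rpow a.toNNReal b.toNNReal hq0 hq1
  have := NNReal.coe_le_coe.mpr h
  push_cast [NNReal.coe_rpow] at this
  rwa [Real.coe_toNNReal a ha, Real.coe_toNNReal b hb] at this

lemma vbe_young {p : ℝ} (hp : 1 ≤ p) {a c : ℝ} (ha : 0 ≤ a) (hc : 0 ≤ c) :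
    p * a ^ (p - 1) * c ≤ (p - 1) * a ^ p + c ^ p := by
  have hp0 : (0:ℝ) < p := by linarith
  have hw1 : (0:ℝ) ≤ (p - 1) / p := div_nonneg (by linarith) hp0.le
  have hw2 : (0:ℝ) ≤ 1 / p := by positivity
  have hsum : (p - 1) / p + 1 / p = 1 := by field_simp; ring
  have h := Real.geom_mean_le_arith_mean2_weighted hw1 hw2
    (Real.rpow_nonneg ha p) (Real.rpow_nonneg hc p) hsum
  have e1 : (a ^ p) ^ ((p - 1) / p) = a ^ (p - 1) := by
    rw [← Real.rpow_mul ha]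
    congr 1
    field_simp
  have e2 : (c ^ p) ^ (1 / p) = c := by
    rw [← Real.rpow_mul hc]
    rw [mul_one_div, div_self hp0.ne', Real.rpow_one]
  rw [e1, e2] at h
  have := mul_le_mul_of_nonneg_left h hp0.le
  calc p * a ^ (p - 1) * c = p * (a ^ (p - 1) * c) := by ring
    _ ≤ p * ((p - 1) / p * a ^ p + 1 / p * c ^ p) := this
    _ = (p - 1) * a ^ p + c ^ p := by field_simp

lemma vbe_key_pos {p : ℝ} (hp1 : 1 ≤ p) (hp2 : p ≤ 2) {a : ℝ} (ha : 0 < a) (b : ℝ) :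
    |a + b| ^ p ≤ a ^ p + p * a ^ (p - 1) * b + 2 * |b| ^ p := by
  have hq0 : (0:ℝ) ≤ p - 1 := by linarith
  have hq1 : p - 1 ≤ 1 := by linarith
  rcases le_or_gt 0 b with hb | hb
  · -- b ≥ 0
    rcases eq_or_lt_of_le hb with rfl | hb'
    · rw [add_zero, abs_of_pos ha, abs_zero, Real.zero_rpow (by linarith : p ≠ 0)]
      simp
    have habs : |a + b| = a + b := abs_of_pos (by linarith)
    have hbabs : |b| = b := abs_of_pos hb'
    rw [habs, hbabs]
    -- tangent at a+b with s = -b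
    have ht := vbe_tangent hp1 (d := a + b) (s := -b) (by linarith) (by linarith)
    have h1 : (a + b) ^ p ≤ a ^ p + p * (a + b) ^ (p - 1) * b := by
      have : a + b + -b = a := by ring
      rw [this] at ht
      nlinarith
    have h2 : (a + b) ^ (p - 1) ≤ a ^ (p - 1) + b ^ (p - 1) := vbe_subadd hq0 hq1 ha.le hb
    have h3 : b ^ (p - 1) * b = b ^ p := by
      rw [← Real.rpow_add_one hb'.ne' (p - 1)]
      ring_nf
    have hbp : 0 ≤ b ^ p := Real.rpow_nonneg hb p
    nlinarith [mul_le_mul_of_nonneg_right h2 (mul_nonneg (by linarith : (0:ℝ) ≤ p) hb)]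
  · -- b < 0; set c = -b
    set c : ℝ := -b with hc
    have hc0 : 0 < c := by simp [hc]; linarith
    have hbabs : |b| = c := by rw [abs_of_neg hb]
    rw [hbabs]
    rcases lt_or_ge c a with hca | hca
    · -- c < a
      have hab : a + b = a - c := by simp [hc]
      have habs : |a + b| = a - c := by rw [hab, abs_of_pos (by linarith)]
      rw [habs]
      have hd : (0:ℝ) < a - c := by linarith
      have ht := vbe_tangent hp1 (d := a - c) (s := c) hd (by linarith)
      have hteq : a - c + c = a := by ring
      rw [hteq] at ht
      have h2 : a ^ (p - 1) ≤ (a - c) ^ (p - 1) + c ^ (p - 1) := by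
        have := vbe_subadd hq0 hq1 hd.le hc0.le
        rwa [hteq] at this
      have h3 : c ^ (p - 1) * c = c ^ p := by
        rw [← Real.rpow_add_one hc0.ne' (p - 1)]
        ring_nf
      have hcp : 0 ≤ c ^ p := Real.rpow_nonneg hc0.le p
      have hb' : b = -c := by simp [hc]
      rw [hb']
      nlinarith [mul_le_mul_of_nonneg_right h2 (mul_nonneg (by linarith : (0:ℝ) ≤ p) hc0.le)]
    · -- a ≤ c
      have habs : |a + b| = c - a := by
        rw [abs_of_nonpos (by simp [hc] at hca ⊢; linarith)]; simp [hc]; ring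
      rw [habs]
      have h1 : (c - a) ^ p ≤ c ^ p :=
        Real.rpow_le_rpow (by linarith) (by linarith) (by linarith)
      have h2 := vbe_young hp1 ha.le hc0.le
      have hap : 0 ≤ a ^ p := Real.rpow_nonneg ha.le p
      have hb' : b = -c := by simp [hc]
      rw [hb']
      nlinarith

lemma vbe_key {p : ℝ} (hp1 : 1 ≤ p) (hp2 : p ≤ 2) (a b : ℝ) :
    |a + b| ^ p ≤ |a| ^ p + (p * |a| ^ (p - 1) * Real.sign a) * b + 2 * |b| ^ p := by
  rcases lt_trichotomy a 0 with hlt | rfl | hgt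
  · have h := vbe_key_pos hp1 hp2 (a := -a) (by linarith) (-b)
    rw [show -a + -b = -(a + b) by ring, abs_neg, abs_neg] at h
    rw [abs_of_neg hlt, Real.sign_of_neg hlt]
    calc |a + b| ^ p ≤ (-a) ^ p + p * (-a) ^ (p - 1) * (-b) + 2 * |b| ^ p := h
      _ = (-a) ^ p + p * (-a) ^ (p - 1) * (-1) * b + 2 * |b| ^ p := by ring
  · rw [Real.sign_zero, abs_zero, Real.zero_rpow (by linarith : p ≠ 0)]
    have : (0:ℝ) ≤ |b| ^ p := Real.rpow_nonneg (abs_nonneg b) p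
    simp
    linarith
  · rw [abs_of_pos hgt, Real.sign_of_pos hgt]
    have h := vbe_key_pos hp1 hp2 hgt b
    calc |a + b| ^ p ≤ a ^ p + p * a ^ (p - 1) * b + 2 * |b| ^ p := h
      _ = a ^ p + p * a ^ (p - 1) * 1 * b + 2 * |b| ^ p := by ring

lemma vbe_measurable_sign : Measurable Real.sign := by
  unfold Real.sign
  exact Measurable.ite (measurableSet_lt measurable_id measurable_const) measurable_const
    (Measurable.ite (measurableSet_lt measurable_const measurable_id) measurable_const
      measurable_const)

lemma vbe_step {Ω : Type*} [MeasurableSpace Ω] (μ : Measure Ω) [IsProbabilityMeasure μ]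
    {p : ℝ} (hp1 : 1 ≤ p) (hp2 : p ≤ 2) {S Y : Ω → ℝ}
    (hSm : Measurable S) (hYm : Measurable Y) (hind : IndepFun S Y μ)
    (hS : MemLp S (ENNReal.ofReal p) μ) (hY : MemLp Y (ENNReal.ofReal p) μ)
    (hY0 : ∫ ω, Y ω ∂μ = 0) :
    ∫ ω, |S ω + Y ω| ^ p ∂μ ≤ ∫ ω, |S ω| ^ p ∂μ + 2 * ∫ ω, |Y ω| ^ p ∂μ := by
  have hp0 : (0:ℝ) < p := by linarith
  have hople : (1:ENNReal) ≤ ENNReal.ofReal p := ENNReal.one_le_ofReal.mpr hp1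
  set f : ℝ → ℝ := fun x => p * |x| ^ (p - 1) * Real.sign x with hf
  have hfm : Measurable f := by
    have h1 : Measurable fun x : ℝ => |x| ^ (p - 1) := by fun_prop
    exact (h1.const_mul p).mul vbe_measurable_sign
  have hSint : Integrable S μ := hS.integrable hople
  have hYint : Integrable Y μ := hY.integrable hople
  have hfbound : ∀ x : ℝ, ‖f x‖ ≤ p * (1 + |x|) := by
    intro x
    have hs : |Real.sign x| ≤ 1 := by
      rcases Real.sign_apply_eq x with h | h | h <;> rw [h] <;> norm_num
    have hr : |x| ^ (p - 1) ≤ 1 + |x| := by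
      rcases le_or_gt (|x|) 1 with hx | hx
      · have := Real.rpow_le_one (abs_nonneg x) hx (by linarith : 0 ≤ p - 1)
        linarith [abs_nonneg x]
      · have := Real.rpow_le_rpow_of_exponent_le hx.le (by linarith : p - 1 ≤ 1)
        rw [Real.rpow_one] at this
        linarith
    have hrn : 0 ≤ |x| ^ (p - 1) := Real.rpow_nonneg (abs_nonneg x) _
    calc ‖f x‖ = p * |x| ^ (p - 1) * |Real.sign x| := by
          rw [hf]
          simp [abs_mul, abs_of_nonneg hp0.le, abs_of_nonneg hrn]
      _ ≤ p * |x| ^ (p - 1) * 1 := by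
          apply mul_le_mul_of_nonneg_left hs (by positivity)
      _ ≤ p * (1 + |x|) := by
          rw [mul_one]
          exact mul_le_mul_of_nonneg_left hr hp0.le
  have hgm : Measurable fun ω => f (S ω) := hfm.comp hSm
  have hgint : Integrable (fun ω => f (S ω)) μ := by
    apply Integrable.mono' (((integrable_const (1:ℝ)).add hSint.abs).const_mul p)
      hgm.aestronglyMeasurable
    filter_upwards with ω
    exact hfbound (S ω)
  have hindgY : IndepFun (fun ω => f (S ω)) Y μ := hind.comp hfm measurable_id
  have hprod_int : Integrable (fun ω => f (S ω) * Y ω) μ := by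
    have := hindgY.integrable_mul hgint hYint
    exact this
  have hprod_eq : ∫ ω, f (S ω) * Y ω ∂μ = 0 := by
    have h := ProbabilityTheory.IndepFun.integral_mul_eq_mul_integral hindgY hgint.aestronglyMeasurable hYint.aestronglyMeasurable
    have : ∫ ω, f (S ω) * Y ω ∂μ = ∫ ω, ((fun ω => f (S ω)) * Y) ω ∂μ := by rfl
    rw [this]
    rw [h, hY0, mul_zero]
  have hofne0 : (ENNReal.ofReal p) ≠ 0 := by
    simp only [ne_eq, ENNReal.ofReal_eq_zero, not_le]; linarith
  have hSp : Integrable (fun ω => |S ω| ^ p) μ := by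
    have := hS.integrable_norm_rpow hofne0 ENNReal.ofReal_ne_top
    simpa [Real.norm_eq_abs, ENNReal.toReal_ofReal hp0.le] using this
  have hYp : Integrable (fun ω => |Y ω| ^ p) μ := by
    have := hY.integrable_norm_rpow hofne0 ENNReal.ofReal_ne_top
    simpa [Real.norm_eq_abs, ENNReal.toReal_ofReal hp0.le] using this
  have hRHS : Integrable (fun ω => |S ω| ^ p + f (S ω) * Y ω + 2 * |Y ω| ^ p) μ :=
    (hSp.add hprod_int).add (hYp.const_mul 2)
  have hmono : ∫ ω, |S ω + Y ω| ^ p ∂μ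
      ≤ ∫ ω, (|S ω| ^ p + f (S ω) * Y ω + 2 * |Y ω| ^ p) ∂μ := by
    apply integral_mono_of_nonneg
    · filter_upwards with ω
      exact Real.rpow_nonneg (abs_nonneg _) p
    · exact hRHS
    · filter_upwards with ω
      exact vbe_key hp1 hp2 (S ω) (Y ω)
  have hsplit : ∫ ω, (|S ω| ^ p + f (S ω) * Y ω + 2 * |Y ω| ^ p) ∂μ
      = ∫ ω, |S ω| ^ p ∂μ + ∫ ω, f (S ω) * Y ω ∂μ + 2 * ∫ ω, |Y ω| ^ p ∂μ := by
    calc ∫ ω, (|S ω| ^ p + f (S ω) * Y ω + 2 * |Y ω| ^ p) ∂μ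
        = ∫ ω, (|S ω| ^ p + f (S ω) * Y ω) ∂μ + ∫ ω, 2 * |Y ω| ^ p ∂μ :=
          integral_add (hSp.add hprod_int) (hYp.const_mul 2)
      _ = (∫ ω, |S ω| ^ p ∂μ + ∫ ω, f (S ω) * Y ω ∂μ) + 2 * ∫ ω, |Y ω| ^ p ∂μ := by
          rw [integral_add hSp hprod_int, integral_const_mul]
  rw [hsplit, hprod_eq, add_zero] at hmono
  exact hmono

/-- **von Bahr–Esseen inequality.** Let `p ∈ [1,2]` and let `X₁, …, Xₙ` be independent,
centered real random variables in `Lᵖ`. Then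
`E[|∑ₖ Xₖ|^p] ≤ 2 ∑ₖ E[|Xₖ|^p]`. -/
theorem stmt1 {Ω : Type*} [MeasurableSpace Ω] (μ : Measure Ω) [IsProbabilityMeasure μ]
    (n : ℕ) (X : Fin n → Ω → ℝ) (p : ℝ) (hp1 : 1 ≤ p) (hp2 : p ≤ 2)
    (hmeas : ∀ k, Measurable (X k))
    (hindep : iIndepFun X μ)
    (hmem : ∀ k, MemLp (X k) (ENNReal.ofReal p) μ)
    (hcent : ∀ k, ∫ ω, X k ω ∂μ = 0) :
    ∫ ω, |∑ k, X k ω| ^ p ∂μ ≤ 2 * ∑ k, ∫ ω, |X k ω| ^ p ∂μ := by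
  have hp0 : (0:ℝ) < p := by linarith
  have key : ∀ s : Finset (Fin n),
      ∫ ω, |∑ k ∈ s, X k ω| ^ p ∂μ ≤ 2 * ∑ k ∈ s, ∫ ω, |X k ω| ^ p ∂μ := by
    intro s
    induction s using Finset.induction_on with
    | empty =>
      simp [Real.zero_rpow hp0.ne']
    | @insert j s hj ih =>
      have hSm : Measurable fun ω => ∑ k ∈ s, X k ω :=
        Finset.measurable_sum s fun k _ => hmeas k
      have hSmem : MemLp (fun ω => ∑ k ∈ s, X k ω) (ENNReal.ofReal p) μ := by
        have h := memLp_finset_sum' s fun k (_ : k ∈ s) => hmem k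
        have he : (∑ k ∈ s, X k) = fun ω => ∑ k ∈ s, X k ω := by
          funext ω; simp [Finset.sum_apply]
        rwa [he] at h
      have hind : IndepFun (fun ω => ∑ k ∈ s, X k ω) (X j) μ := by
        have h := ProbabilityTheory.iIndepFun.indepFun_finsetSum_of_notMem hindep hmeas hj
        have he : (∑ k ∈ s, X k) = fun ω => ∑ k ∈ s, X k ω := by
          funext ω; simp [Finset.sum_apply]
        rwa [he] at h
      have hstep := vbe_step μ hp1 hp2 hSm (hmeas j) hind hSmem (hmem j) (hcent j)
      have heq : ∀ ω, ∑ k ∈ insert j s, X k ω = (∑ k ∈ s, X k ω) + X j ω := by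
        intro ω
        rw [Finset.sum_insert hj]
        ring
      calc ∫ ω, |∑ k ∈ insert j s, X k ω| ^ p ∂μ
          = ∫ ω, |(∑ k ∈ s, X k ω) + X j ω| ^ p ∂μ := by
            congr 1; funext ω; rw [heq ω]
        _ ≤ ∫ ω, |∑ k ∈ s, X k ω| ^ p ∂μ + 2 * ∫ ω, |X j ω| ^ p ∂μ := hstep
        _ ≤ 2 * ∑ k ∈ s, ∫ ω, |X k ω| ^ p ∂μ + 2 * ∫ ω, |X j ω| ^ p ∂μ := by linarith
        _ = 2 * ∑ k ∈ insert j s, ∫ ω, |X k ω| ^ p ∂μ := by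
            rw [Finset.sum_insert hj]; ring
  exact key Finset.univ
end

section
/- As t → ∞, the expected overlap of a branching Brownian motion at infinite temperature satisfies E[ν_{0,t}([a,1])] ~ 2·a·t·e^{−at}, for every fixed a ∈ (0,1). Equivalently, with q = e^{−at} and p = e^{−(1−a)t}, the quantity pq ∫₀^∞ u e^{−u}(1+(1−p)e^{−u}) / ((1−(1−p)e^{−u})(1−(1−pq)e^{−u})²) du is asymptotically equivalent to 2 q log(1/q) as t → ∞. -/
open MeasureTheory Filter Real Set

lemma hx1 (u : ℝ) (hu : 0 ≤ u) : u ≤ 2 * exp (u/4) := by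
  have h := Real.add_one_le_exp (u/8)
  have h2 : exp (u/4) = exp (u/8) * exp (u/8) := by
    rw [← Real.exp_add]; ring_nf
  nlinarith [Real.exp_pos (u/8), sq_nonneg (u - 8),
    mul_le_mul h h (by linarith) (Real.exp_pos (u/8)).le]

lemma hx2 (u : ℝ) (hu : 0 ≤ u) : u * exp (-u) ≤ 1 - exp (-u) := by
  have h := Real.add_one_le_exp u
  have := Real.exp_pos (-u)
  have he : exp (-u) * exp u = 1 := by rw [← Real.exp_add]; simp
  nlinarith

lemma hx3 (u : ℝ) (hu : 0 ≤ u) : 1 - exp (-u) - u * exp (-u) ≤ u^2 := by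
  have h := Real.add_one_le_exp (-u)
  nlinarith [Real.exp_pos (-u)]

lemma den_pos {c u : ℝ} (hc0 : 0 ≤ c) (hc1 : c < 1) (hu : 0 ≤ u) :
    0 < 1 - c * exp (-u) := by
  have h1 : exp (-u) ≤ 1 := Real.exp_le_one_iff.mpr (by linarith)
  nlinarith [Real.exp_pos (-u)]

lemma den_ge {c u : ℝ} (hc0 : 0 ≤ c) (hc1 : c ≤ 1) :
    1 - exp (-u) ≤ 1 - c * exp (-u) := by
  nlinarith [Real.exp_pos (-u)]

lemma tends_exp_neg : Tendsto (fun u : ℝ => exp (-u)) atTop (nhds 0) := by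
  simpa using Real.tendsto_exp_neg_atTop_nhds_zero

lemma hderiv_den (c u : ℝ) : HasDerivAt (fun u : ℝ => 1 - c * exp (-u)) (c * exp (-u)) u := by
  have h : HasDerivAt (fun u : ℝ => exp (-u)) (-exp (-u)) u := by
    simpa using ((hasDerivAt_id u).neg).exp
  simpa using ((h.const_mul c).const_sub 1)

lemma E1 {c : ℝ} (hc0 : 0 < c) (hc1 : c < 1) :
    IntegrableOn (fun u : ℝ => exp (-u) / (1 - c * exp (-u))) (Ioi 0) ∧
    ∫ u in Ioi (0:ℝ), exp (-u) / (1 - c * exp (-u)) = -log (1 - c) / c := by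
  have hne : ∀ x : ℝ, 0 ≤ x → (1 - c * exp (-x)) ≠ 0 :=
    fun x hx => (den_pos hc0.le hc1 hx).ne'
  have hderiv : ∀ x ∈ Ici (0:ℝ), HasDerivAt
      (fun u : ℝ => (1/c) * log (1 - c * exp (-u))) (exp (-x) / (1 - c * exp (-x))) x := by
    intro x hx
    have h := ((hderiv_den c x).log (hne x hx)).const_mul (1/c)
    refine h.congr_deriv ?_
    field_simp
  have hpos : ∀ x ∈ Ioi (0:ℝ), 0 ≤ exp (-x) / (1 - c * exp (-x)) :=
    fun x hx => div_nonneg (Real.exp_pos _).le (den_pos hc0.le hc1 hx.le).le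
  have htends : Tendsto (fun u : ℝ => (1/c) * log (1 - c * exp (-u))) atTop (nhds 0) := by
    have h1 : Tendsto (fun u : ℝ => 1 - c * exp (-u)) atTop (nhds 1) := by
      simpa using ((tends_exp_neg.const_mul c).const_sub 1)
    have h2 := (Real.continuousAt_log (by norm_num : (1:ℝ) ≠ 0)).tendsto.comp h1
    simpa using h2.const_mul (1/c)
  refine ⟨integrableOn_Ioi_deriv_of_nonneg' hderiv hpos htends, ?_⟩
  rw [integral_Ioi_of_hasDerivAt_of_nonneg' hderiv hpos htends]
  simp
  field_simp

lemma E2 {c : ℝ} (hc0 : 0 < c) (hc1 : c < 1) :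
    IntegrableOn (fun u : ℝ => u * exp (-u) / (1 - c * exp (-u))^2) (Ioi 0) ∧
    ∫ u in Ioi (0:ℝ), u * exp (-u) / (1 - c * exp (-u))^2 = -log (1 - c) / c := by
  have hne : ∀ x : ℝ, 0 ≤ x → (1 - c * exp (-x)) ≠ 0 :=
    fun x hx => (den_pos hc0.le hc1 hx).ne'
  have hderiv : ∀ x ∈ Ici (0:ℝ), HasDerivAt
      (fun u : ℝ => -(u * exp (-u)) / (1 - c * exp (-u)) + (1/c) * log (1 - c * exp (-u)))
      (x * exp (-x) / (1 - c * exp (-x))^2) x := by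
    intro x hx
    have hexp : HasDerivAt (fun u : ℝ => exp (-u)) (-exp (-x)) x := by
      simpa using ((hasDerivAt_id x).neg).exp
    have hN : HasDerivAt (fun u : ℝ => -(u * exp (-u)))
        (-(exp (-x) + x * -exp (-x))) x := by
      exact ((hasDerivAt_id' x).mul hexp).neg.congr_deriv (by ring)
    have hq := hN.div (hderiv_den c x) (hne x hx)
    have hl := ((hderiv_den c x).log (hne x hx)).const_mul (1/c)
    have h := hq.add hl
    refine h.congr_deriv ?_
    have := hne x hx
    have h' : 1 - exp (-x) * c ≠ 0 := by rwa [mul_comm]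
    field_simp
    ring
  have hpos : ∀ x ∈ Ioi (0:ℝ), 0 ≤ x * exp (-x) / (1 - c * exp (-x))^2 :=
    fun x hx => div_nonneg (mul_nonneg (le_of_lt hx) (Real.exp_pos _).le) (sq_nonneg _)
  have htends : Tendsto
      (fun u : ℝ => -(u * exp (-u)) / (1 - c * exp (-u)) + (1/c) * log (1 - c * exp (-u)))
      atTop (nhds 0) := by
    have h1 : Tendsto (fun u : ℝ => 1 - c * exp (-u)) atTop (nhds 1) := by
      simpa using ((tends_exp_neg.const_mul c).const_sub 1)
    have h2 := (Real.continuousAt_log (by norm_num : (1:ℝ) ≠ 0)).tendsto.comp h1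
    have hnum : Tendsto (fun u : ℝ => -(u * exp (-u))) atTop (nhds 0) := by
      have := Real.tendsto_pow_mul_exp_neg_atTop_nhds_zero 1
      simp only [pow_one] at this
      simpa using this.neg
    have := (hnum.div h1 (by norm_num)).add ((h2.const_mul (1/c)).congr (fun x => rfl))
    simpa using this
  refine ⟨integrableOn_Ioi_deriv_of_nonneg' hderiv hpos htends, ?_⟩
  rw [integral_Ioi_of_hasDerivAt_of_nonneg' hderiv hpos htends]
  simp
  field_simp

lemma exp_quarter_ge_one {u : ℝ} (hu0 : 0 ≤ u) (hu1 : u ≤ 1) :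
    4 ≤ 12 * exp (-(u/4)) := by
  have h1 : exp (u/4) ≤ exp 1 := Real.exp_le_exp.mpr (by linarith)
  have h2 : exp 1 < 2.7182818286 := Real.exp_one_lt_d9
  have h3 := Real.exp_pos (u/4)
  have h4 : exp (-(u/4)) * exp (u/4) = 1 := by rw [← Real.exp_add]; simp
  nlinarith [Real.exp_pos (-(u/4))]

lemma gbound {c : ℝ} (hc0 : 0 ≤ c) (hc1 : c < 1) {u : ℝ} (hu : 0 < u) :
    u * exp (-u) / (1 - c * exp (-u)) ≤ 12 * exp (-(u/4)) := by
  have hD : 0 < 1 - c * exp (-u) := den_pos hc0 hc1 hu.le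
  have hDge : 1 - exp (-u) ≤ 1 - c * exp (-u) := den_ge hc0 hc1.le
  have h2 := hx2 u hu.le
  rw [div_le_iff₀ hD]
  rcases le_or_gt u 1 with h | h
  · have hM := exp_quarter_ge_one hu.le h
    nlinarith [mul_pos hu (Real.exp_pos (-u))]
  · -- u ≥ 1 : u * exp(-u) ≤ 2 * exp(-u/4) and M*D ≥ 12 exp(-u/4)/2
    have hone : exp (-u) ≤ exp (-1) := Real.exp_le_exp.mpr (by linarith)
    have he1 : exp (-1) ≤ 1/2 := by
      have h2 : (2:ℝ) ≤ exp 1 := by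
        nlinarith [Real.add_one_le_exp 1]
      have h4 : exp (-1) * exp 1 = 1 := by rw [← Real.exp_add]; simp
      nlinarith [Real.exp_pos (-1 : ℝ)]
    have hDhalf : (1:ℝ)/2 ≤ 1 - c * exp (-u) := by linarith
    have hkey : u * exp (-u) ≤ 2 * exp (-(u/4)) := by
      have h1 := hx1 u hu.le
      have hsplit : exp (-u) = exp (-(u/4)) * exp (-(3*u/4)) := by
        rw [← Real.exp_add]; ring_nf
      have h34 : exp (u/4) * exp (-(3*u/4)) ≤ 1 := by
        rw [← Real.exp_add]
        apply Real.exp_le_one_iff.mpr; linarith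
      calc u * exp (-u) = u * (exp (-(u/4)) * exp (-(3*u/4))) := by rw [hsplit]
        _ ≤ (2 * exp (u/4)) * (exp (-(u/4)) * exp (-(3*u/4))) := by
            apply mul_le_mul_of_nonneg_right h1 (by positivity)
        _ = 2 * exp (-(u/4)) * (exp (u/4) * exp (-(3*u/4))) := by ring
        _ ≤ 2 * exp (-(u/4)) * 1 := by
            apply mul_le_mul_of_nonneg_left h34 (by positivity)
        _ = 2 * exp (-(u/4)) := by ring
    nlinarith [Real.exp_pos (-(u/4))]

set_option maxHeartbeats 1000000 in
lemma mbound {b c : ℝ} (hb0 : 0 ≤ b) (hb1 : b < 1) (hc0 : 0 ≤ c) (hc1 : c < 1)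
    {u : ℝ} (hu : 0 < u) :
    |(u * exp (-u) - (1 - exp (-u))) * exp (-u) /
      ((1 - b * exp (-u)) * (1 - c * exp (-u)))| ≤ 12 * exp (-(u/4)) := by
  have hDb : 0 < 1 - b * exp (-u) := den_pos hb0 hb1 hu.le
  have hDc : 0 < 1 - c * exp (-u) := den_pos hc0 hc1 hu.le
  have hDbge : 1 - exp (-u) ≤ 1 - b * exp (-u) := den_ge hb0 hb1.le
  have hDcge : 1 - exp (-u) ≤ 1 - c * exp (-u) := den_ge hc0 hc1.le
  have h2 := hx2 u hu.le
  have hv : 0 < exp (-u) := Real.exp_pos _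
  have hv1 : exp (-u) < 1 := Real.exp_lt_one_iff.mpr (by linarith)
  have hX : 0 ≤ (1 - exp (-u)) - u * exp (-u) := by linarith
  have habs : |(u * exp (-u) - (1 - exp (-u))) * exp (-u) /
      ((1 - b * exp (-u)) * (1 - c * exp (-u)))|
      = ((1 - exp (-u)) - u * exp (-u)) * exp (-u) /
      ((1 - b * exp (-u)) * (1 - c * exp (-u))) := by
    have hrw : (u * exp (-u) - (1 - exp (-u))) * exp (-u) /
      ((1 - b * exp (-u)) * (1 - c * exp (-u)))
      = -(((1 - exp (-u)) - u * exp (-u)) * exp (-u) /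
      ((1 - b * exp (-u)) * (1 - c * exp (-u)))) := by ring
    rw [hrw, abs_neg, abs_of_nonneg]
    exact div_nonneg (mul_nonneg hX hv.le) (by positivity)
  rw [habs, div_le_iff₀ (by positivity)]
  set v := exp (-u) with hvdef
  set M := 12 * exp (-(u/4)) with hMdef
  set D := (1 - b * v) * (1 - c * v) with hDdef
  rcases le_or_gt u 1 with h | h
  · have hM : 4 ≤ M := exp_quarter_ge_one hu.le h
    have h3 := hx3 u hu.le
    have hv3 : (1:ℝ)/4 ≤ v := by
      have h1 : exp u ≤ exp 1 := Real.exp_le_exp.mpr h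
      have h5 : exp 1 < 2.7182818286 := Real.exp_one_lt_d9
      have h4 : v * exp u = 1 := by rw [hvdef, ← Real.exp_add]; simp
      nlinarith [Real.exp_pos u]
    have hDD : (u * v) * (u * v) ≤ D := by
      have h6 : u * v ≤ 1 - b * v := by linarith
      have h7 : u * v ≤ 1 - c * v := by linarith
      have h8 : 0 ≤ u * v := by positivity
      nlinarith
    have s1 : (1 - v - u*v) * v ≤ u^2 * v := mul_le_mul_of_nonneg_right h3 hv.le
    have s2 : u^2 * v ≤ 4 * ((u*v) * (u*v)) := by
      have hr : 4 * ((u*v) * (u*v)) - u^2 * v = (u^2 * v) * (4*v - 1) := by ring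
      have hnn : 0 ≤ (u^2 * v) * (4*v - 1) :=
        mul_nonneg (mul_nonneg (sq_nonneg u) hv.le) (by linarith)
      linarith
    have hD0 : 0 < D := by rw [hDdef]; positivity
    have s4 : 4 * D ≤ M * D := mul_le_mul_of_nonneg_right hM hD0.le
    nlinarith
  · have hone : v ≤ exp (-1) := Real.exp_le_exp.mpr (by linarith)
    have he1 : exp (-1) ≤ 1/2 := by
      have h2' : (2:ℝ) ≤ exp 1 := by nlinarith [Real.add_one_le_exp 1]
      have h4 : exp (-1) * exp 1 = 1 := by rw [← Real.exp_add]; simp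
      nlinarith [Real.exp_pos (-1 : ℝ)]
    have hqu : v ≤ exp (-(u/4)) := Real.exp_le_exp.mpr (by linarith)
    have hhalf : (1:ℝ)/2 ≤ 1 - v := by linarith
    have hDD : (1 - v) * (1 - v) ≤ D := by nlinarith
    have s1 : (1 - v - u*v) * v ≤ (1 - v) * v := by nlinarith [mul_nonneg (mul_nonneg hu.le hv.le) hv.le]
    have s2 : (1 - v) * v ≤ (1 - v) * exp (-(u/4)) := mul_le_mul_of_nonneg_left hqu (by linarith)
    have he4 := Real.exp_pos (-(u/4))
    have s3 : (1 - v) * exp (-(u/4)) ≤ 2 * ((1-v)*(1-v)) * exp (-(u/4)) := by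
      have hr : 2 * ((1-v)*(1-v)) * exp (-(u/4)) - (1 - v) * exp (-(u/4))
          = ((1-v) * exp (-(u/4))) * (1 - 2*v) := by ring
      have hnn : 0 ≤ ((1-v) * exp (-(u/4))) * (1 - 2*v) :=
        mul_nonneg (mul_nonneg (by linarith) he4.le) (by linarith)
      linarith
    have s4 : 2 * ((1-v)*(1-v)) * exp (-(u/4)) ≤ M * D := by
      have hr : M * D - 2 * ((1-v)*(1-v)) * exp (-(u/4))
          = exp (-(u/4)) * (12 * D - 2 * ((1-v)*(1-v))) := by rw [hMdef]; ring
      have h12 : 2 * ((1-v)*(1-v)) ≤ 12 * D := by nlinarith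
      have hnn : 0 ≤ exp (-(u/4)) * (12 * D - 2 * ((1-v)*(1-v))) :=
        mul_nonneg he4.le (by linarith)
      linarith
    linarith

lemma exp_quarter_int : IntegrableOn (fun u : ℝ => 12 * exp (-(u/4))) (Ioi 0) := by
  have h := (exp_neg_integrableOn_Ioi 0 (by norm_num : (0:ℝ) < 1/4)).const_mul 12
  refine h.congr ?_
  filter_upwards with x
  ring_nf

lemma exp_quarter_val : ∫ u in Ioi (0:ℝ), 12 * exp (-(u/4)) = 48 := by
  have hderiv : ∀ x ∈ Ici (0:ℝ), HasDerivAt (fun u : ℝ => -48 * exp (-(u/4)))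
      (12 * exp (-(x/4))) x := by
    intro x _
    have h : HasDerivAt (fun u : ℝ => -(u/4)) (-(1/4)) x := by
      exact ((hasDerivAt_id' x).div_const 4).neg.congr_deriv (by ring)
    have := (h.exp).const_mul (-48 : ℝ)
    exact this.congr_deriv (by ring)
  have htends : Tendsto (fun u : ℝ => -48 * exp (-(u/4))) atTop (nhds 0) := by
    have h1 : Tendsto (fun u : ℝ => -(u/4)) atTop atBot := by
      apply tendsto_neg_atBot_iff.mpr
      exact tendsto_id.atTop_div_const (by norm_num)
    have := Real.tendsto_exp_atBot.comp h1
    simpa using this.const_mul (-48 : ℝ)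
  rw [integral_Ioi_of_hasDerivAt_of_nonneg' hderiv (fun x _ => by positivity) htends]
  norm_num

noncomputable def Jint (c : ℝ) : ℝ := ∫ u in Ioi (0:ℝ), u * exp (-u) / (1 - c * exp (-u))

noncomputable def Mint (b c : ℝ) : ℝ := ∫ u in Ioi (0:ℝ),
  (u * exp (-u) - (1 - exp (-u))) * exp (-u) /
    ((1 - b * exp (-u)) * (1 - c * exp (-u)))

lemma Jcont {c : ℝ} (hc0 : 0 ≤ c) (hc1 : c < 1) :
    ContinuousOn (fun u : ℝ => u * exp (-u) / (1 - c * exp (-u))) (Ioi 0) := by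
  apply ContinuousOn.div
  · fun_prop
  · fun_prop
  · exact fun x hx => (den_pos hc0 hc1 (le_of_lt hx)).ne'

lemma Jint_facts {c : ℝ} (hc0 : 0 ≤ c) (hc1 : c < 1) :
    IntegrableOn (fun u : ℝ => u * exp (-u) / (1 - c * exp (-u))) (Ioi 0) ∧
    0 ≤ Jint c ∧ Jint c ≤ 48 := by
  have hint : IntegrableOn (fun u : ℝ => u * exp (-u) / (1 - c * exp (-u))) (Ioi 0) := by
    apply Integrable.mono' exp_quarter_int
      (((Jcont hc0 hc1)).aestronglyMeasurable measurableSet_Ioi)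
    filter_upwards [ae_restrict_mem measurableSet_Ioi] with x hx
    rw [Real.norm_eq_abs, abs_of_nonneg (div_nonneg (mul_nonneg (le_of_lt hx) (Real.exp_pos _).le)
      (den_pos hc0 hc1 (le_of_lt hx)).le)]
    exact gbound hc0 hc1 hx
  refine ⟨hint, ?_, ?_⟩
  · apply setIntegral_nonneg measurableSet_Ioi
    exact fun x hx => div_nonneg (mul_nonneg (le_of_lt hx) (Real.exp_pos _).le)
      (den_pos hc0 hc1 (le_of_lt hx)).le
  · rw [Jint, ← exp_quarter_val]
    apply setIntegral_mono_on hint exp_quarter_int measurableSet_Ioi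
    exact fun x hx => gbound hc0 hc1 hx

lemma Mcont {b c : ℝ} (hb0 : 0 ≤ b) (hb1 : b < 1) (hc0 : 0 ≤ c) (hc1 : c < 1) :
    ContinuousOn (fun u : ℝ => (u * exp (-u) - (1 - exp (-u))) * exp (-u) /
      ((1 - b * exp (-u)) * (1 - c * exp (-u)))) (Ioi 0) := by
  apply ContinuousOn.div
  · fun_prop
  · fun_prop
  · intro x hx
    exact (mul_pos (den_pos hb0 hb1 (le_of_lt hx)) (den_pos hc0 hc1 (le_of_lt hx))).ne'

lemma Mint_facts {b c : ℝ} (hb0 : 0 ≤ b) (hb1 : b < 1) (hc0 : 0 ≤ c) (hc1 : c < 1) :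
    IntegrableOn (fun u : ℝ => (u * exp (-u) - (1 - exp (-u))) * exp (-u) /
      ((1 - b * exp (-u)) * (1 - c * exp (-u)))) (Ioi 0) ∧
    |Mint b c| ≤ 48 := by
  have hint : IntegrableOn (fun u : ℝ => (u * exp (-u) - (1 - exp (-u))) * exp (-u) /
      ((1 - b * exp (-u)) * (1 - c * exp (-u)))) (Ioi 0) := by
    apply Integrable.mono' exp_quarter_int
      ((Mcont hb0 hb1 hc0 hc1).aestronglyMeasurable measurableSet_Ioi)
    filter_upwards [ae_restrict_mem measurableSet_Ioi] with x hx
    rw [Real.norm_eq_abs]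
    exact mbound hb0 hb1 hc0 hc1 hx
  refine ⟨hint, ?_⟩
  rw [Mint, ← exp_quarter_val, ← Real.norm_eq_abs]
  apply norm_integral_le_of_norm_le exp_quarter_int
  filter_upwards [ae_restrict_mem measurableSet_Ioi] with x hx
  rw [Real.norm_eq_abs]
  exact mbound hb0 hb1 hc0 hc1 hx

set_option maxHeartbeats 1000000 in
lemma master {b c : ℝ} (hb0 : 0 < b) (hc1 : c < 1) (hbc : b < c) :
    ∫ u in Ioi (0:ℝ), u * exp (-u) * (1 + b * exp (-u)) /
        ((1 - b * exp (-u)) * (1 - c * exp (-u))^2)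
    = (2*b^2/(b-c)) * ( (b-1)/(b-c) * (-log (1-b)/b) + (c-1)/(c-b) * (-log (1-c)/c)
        + Mint b c )
      + (1 - (b+c)/(c-b)) * Jint c + (b+c)/(c-b) * (-log (1-c)/c) := by
  have hc0 : 0 < c := hb0.trans hbc
  have hb1 : b < 1 := hbc.trans hc1
  have hbc' : b - c ≠ 0 := by intro h; nlinarith
  have hcb' : c - b ≠ 0 := by intro h; nlinarith
  set A := 2*b^2/(b-c)^2 with hA
  set C := (b+c)/(c-b) with hC
  set B := 1 - A - C with hB
  have hgb := (Jint_facts hb0.le hb1).1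
  have hgc := (Jint_facts hc0.le hc1).1
  have hhc := (E2 hc0 hc1).1
  have heb := (E1 hb0 hb1).1
  have hec := (E1 hc0 hc1).1
  have hm := (Mint_facts hb0.le hb1 hc0.le hc1).1
  have hsum1 : IntegrableOn (fun u : ℝ => B * (u * exp (-u) / (1 - c * exp (-u)))
      + C * (u * exp (-u) / (1 - c * exp (-u))^2)) (Ioi 0) :=
    (hgc.const_mul B).add (hhc.const_mul C)
  -- step 1
  have step1 : ∫ u in Ioi (0:ℝ), u * exp (-u) * (1 + b * exp (-u)) /
        ((1 - b * exp (-u)) * (1 - c * exp (-u))^2)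
      = A * Jint b + (B * Jint c + C * (-log (1-c)/c)) := by
    have hptw : ∀ u ∈ Ioi (0:ℝ), u * exp (-u) * (1 + b * exp (-u)) /
        ((1 - b * exp (-u)) * (1 - c * exp (-u))^2)
        = A * (u * exp (-u) / (1 - b * exp (-u)))
          + (B * (u * exp (-u) / (1 - c * exp (-u)))
          + C * (u * exp (-u) / (1 - c * exp (-u))^2)) := by
      intro u hu
      have h1 : (1 - b * exp (-u)) ≠ 0 := (den_pos hb0.le hb1 (le_of_lt hu)).ne'
      have h2 : (1 - c * exp (-u)) ≠ 0 := (den_pos hc0.le hc1 (le_of_lt hu)).ne'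
      rw [hB, hA, hC]
      have h1' : 1 - exp (-u) * b ≠ 0 := by rwa [mul_comm]
      have h2' : 1 - exp (-u) * c ≠ 0 := by rwa [mul_comm]
      field_simp
      ring
    have i1 : ∫ u in Ioi (0:ℝ), (B * (u * exp (-u) / (1 - c * exp (-u)))
        + C * (u * exp (-u) / (1 - c * exp (-u))^2))
        = B * Jint c + C * (-log (1-c)/c) := by
      rw [integral_add (hgc.const_mul B) (hhc.const_mul C),
        MeasureTheory.integral_const_mul, MeasureTheory.integral_const_mul, (E2 hc0 hc1).2]
      rfl
    rw [setIntegral_congr_fun measurableSet_Ioi hptw,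
      integral_add (hgb.const_mul A) hsum1, MeasureTheory.integral_const_mul, i1]
    rfl
  -- integrability of l
  have hl : IntegrableOn (fun u : ℝ => exp (-u) * (1 - exp (-u)) /
      ((1 - b * exp (-u)) * (1 - c * exp (-u)))) (Ioi 0) := by
    have hsum2 : IntegrableOn (fun u : ℝ => (b-1)/(b-c) * (exp (-u) / (1 - b * exp (-u)))
        + (c-1)/(c-b) * (exp (-u) / (1 - c * exp (-u)))) (Ioi 0) :=
      (heb.const_mul _).add (hec.const_mul _)
    apply hsum2.congr_fun ?_ measurableSet_Ioi
    intro u hu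
    have h1 : (1 - b * exp (-u)) ≠ 0 := (den_pos hb0.le hb1 (le_of_lt hu)).ne'
    have h2 : (1 - c * exp (-u)) ≠ 0 := (den_pos hc0.le hc1 (le_of_lt hu)).ne'
    have h1' : 1 - exp (-u) * b ≠ 0 := by rwa [mul_comm]
    have h2' : 1 - exp (-u) * c ≠ 0 := by rwa [mul_comm]
    field_simp
    ring
  -- value of ∫ l
  have hlval : ∫ u in Ioi (0:ℝ), exp (-u) * (1 - exp (-u)) /
      ((1 - b * exp (-u)) * (1 - c * exp (-u)))
      = (b-1)/(b-c) * (-log (1-b)/b) + (c-1)/(c-b) * (-log (1-c)/c) := by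
    have hptw : ∀ u ∈ Ioi (0:ℝ), exp (-u) * (1 - exp (-u)) /
        ((1 - b * exp (-u)) * (1 - c * exp (-u)))
        = (b-1)/(b-c) * (exp (-u) / (1 - b * exp (-u)))
          + (c-1)/(c-b) * (exp (-u) / (1 - c * exp (-u))) := by
      intro u hu
      have h1 : (1 - b * exp (-u)) ≠ 0 := (den_pos hb0.le hb1 (le_of_lt hu)).ne'
      have h2 : (1 - c * exp (-u)) ≠ 0 := (den_pos hc0.le hc1 (le_of_lt hu)).ne'
      have h1' : 1 - exp (-u) * b ≠ 0 := by rwa [mul_comm]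
      have h2' : 1 - exp (-u) * c ≠ 0 := by rwa [mul_comm]
      field_simp
      ring
    rw [setIntegral_congr_fun measurableSet_Ioi hptw,
      integral_add (heb.const_mul _) (hec.const_mul _),
      MeasureTheory.integral_const_mul, MeasureTheory.integral_const_mul,
      (E1 hb0 hb1).2, (E1 hc0 hc1).2]
  -- step 2
  have step2 : Jint b = Jint c + (b-c) * (((b-1)/(b-c) * (-log (1-b)/b)
      + (c-1)/(c-b) * (-log (1-c)/c)) + Mint b c) := by
    have hsub : Jint b - Jint c = ∫ u in Ioi (0:ℝ),
        (u * exp (-u) / (1 - b * exp (-u)) - u * exp (-u) / (1 - c * exp (-u))) :=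
      (integral_sub hgb hgc).symm
    have hptw : ∀ u ∈ Ioi (0:ℝ),
        (u * exp (-u) / (1 - b * exp (-u)) - u * exp (-u) / (1 - c * exp (-u)))
        = (b - c) * (exp (-u) * (1 - exp (-u)) /
            ((1 - b * exp (-u)) * (1 - c * exp (-u)))
          + (u * exp (-u) - (1 - exp (-u))) * exp (-u) /
            ((1 - b * exp (-u)) * (1 - c * exp (-u)))) := by
      intro u hu
      have h1 : (1 - b * exp (-u)) ≠ 0 := (den_pos hb0.le hb1 (le_of_lt hu)).ne'
      have h2 : (1 - c * exp (-u)) ≠ 0 := (den_pos hc0.le hc1 (le_of_lt hu)).ne'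
      have h1' : 1 - exp (-u) * b ≠ 0 := by rwa [mul_comm]
      have h2' : 1 - exp (-u) * c ≠ 0 := by rwa [mul_comm]
      field_simp
      ring
    have hkey : Jint b - Jint c = (b-c) * ((∫ u in Ioi (0:ℝ), exp (-u) * (1 - exp (-u)) /
        ((1 - b * exp (-u)) * (1 - c * exp (-u)))) + Mint b c) := by
      rw [hsub, setIntegral_congr_fun measurableSet_Ioi hptw,
        MeasureTheory.integral_const_mul, integral_add hl hm]
      rfl
    rw [hlval] at hkey
    linarith
  rw [step1, step2, hB, hA, hC]
  have hAbc : (2*b^2/(b-c)^2) * (b - c) = 2*b^2/(b-c) := by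
    field_simp
  field_simp
  ring

noncomputable def MainF (a t : ℝ) : ℝ :=
  (-(2*(1 - exp (-(1-a)*t))^2*(1-a))/((1 - exp (-a*t))^2*(1 - exp (-(1-a)*t)))
   + (2*(1 - exp (-(1-a)*t))^2* exp (-a*t))/((1 - exp (-a*t))^2*(1 - exp (-(1-a)*t)*exp (-a*t)))
   + (2 - exp (-(1-a)*t) - exp (-(1-a)*t)*exp (-a*t))/((1 - exp (-a*t))*(1 - exp (-(1-a)*t)*exp (-a*t)))) / (2*a)

noncomputable def ErrF (a t : ℝ) : ℝ :=
  ((-(2*(1 - exp (-(1-a)*t))^2)/(1 - exp (-a*t)))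
      * Mint (1 - exp (-(1-a)*t)) (1 - exp (-(1-a)*t)*exp (-a*t))
   + (exp (-(1-a)*t) - (2 - exp (-(1-a)*t) - exp (-(1-a)*t)*exp (-a*t))/(1 - exp (-a*t)))
      * Jint (1 - exp (-(1-a)*t)*exp (-a*t))) / (2*a*t)

set_option maxHeartbeats 2000000 in
lemma key_eq (a : ℝ) (ha0 : 0 < a) (ha1 : a < 1) (t : ℝ) (ht : 1 ≤ t) :
    (Real.exp (-(1 - a) * t) * Real.exp (-a * t) *
        ∫ u in Set.Ioi (0 : ℝ),
          u * Real.exp (-u) * (1 + (1 - Real.exp (-(1 - a) * t)) * Real.exp (-u)) /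
            ((1 - (1 - Real.exp (-(1 - a) * t)) * Real.exp (-u)) *
              (1 - (1 - Real.exp (-(1 - a) * t) * Real.exp (-a * t)) * Real.exp (-u)) ^ 2))
        / (2 * a * t * Real.exp (-a * t))
    = MainF a t + ErrF a t := by
  have ht0 : (0:ℝ) < t := lt_of_lt_of_le one_pos ht
  have hp0 : 0 < exp (-(1-a)*t) := Real.exp_pos _
  have hq0 : 0 < exp (-a*t) := Real.exp_pos _
  have hp1 : exp (-(1-a)*t) < 1 := Real.exp_lt_one_iff.mpr (by nlinarith)
  have hq1 : exp (-a*t) < 1 := Real.exp_lt_one_iff.mpr (by nlinarith)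
  have hb0 : 0 < 1 - exp (-(1-a)*t) := by linarith
  have hc1 : 1 - exp (-(1-a)*t) * exp (-a*t) < 1 := by nlinarith
  have hbc : 1 - exp (-(1-a)*t) < 1 - exp (-(1-a)*t) * exp (-a*t) := by nlinarith
  rw [master hb0 hc1 hbc]
  have e1 : (1:ℝ) - (1 - exp (-(1-a)*t)) = exp (-(1-a)*t) := by ring
  have e2 : (1:ℝ) - (1 - exp (-(1-a)*t) * exp (-a*t)) = exp (-(1-a)*t) * exp (-a*t) := by
    ring
  rw [e1, e2, Real.log_mul hp0.ne' hq0.ne', Real.log_exp, Real.log_exp]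
  have hc0 : 0 < 1 - exp (-(1-a)*t) * exp (-a*t) := by nlinarith
  have hq1' : (0:ℝ) < 1 - exp (-a*t) := by linarith
  rw [MainF, ErrF]
  set p := exp (-(1-a)*t) with hpdef
  set q := exp (-a*t) with hqdef
  set MM := Mint (1-p) (1-p*q) with hMM
  set JJ := Jint (1-p*q) with hJJ
  have hbcne : (1 - p) - (1 - p * q) ≠ 0 := by intro h; nlinarith
  have hcbne : (1 - p * q) - (1 - p) ≠ 0 := by intro h; nlinarith
  have hbne : (1 - p) ≠ 0 := by intro h; nlinarith
  have hcne : (1 - p * q) ≠ 0 := by intro h; nlinarith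
  have hqne : (1 - q) ≠ 0 := by intro h; nlinarith
  have hpne : p ≠ 0 := hp0.ne'
  have hqne0 : q ≠ 0 := hq0.ne'
  have d1 : (1:ℝ) - p - (1 - p * q) = -(p * (1 - q)) := by ring
  have d2 : (1:ℝ) - p * q - (1 - p) = p * (1 - q) := by ring
  have d3 : (1:ℝ) - p - 1 = -p := by ring
  have d4 : (1:ℝ) - p * q - 1 = -(p * q) := by ring
  rw [d1, d2, d3, d4]
  have hpq' : p * (1 - q) ≠ 0 := mul_ne_zero hpne hqne
  field_simp
  ring

lemma tendsto_exp_coef {k : ℝ} (hk : 0 < k) :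
    Tendsto (fun t : ℝ => exp (-k*t)) atTop (nhds 0) := by
  have h1 : Tendsto (fun t : ℝ => k*t) atTop atTop :=
    Tendsto.const_mul_atTop hk tendsto_id
  have h2 : Tendsto (fun t : ℝ => -(k*t)) atTop atBot := tendsto_neg_atBot_iff.mpr h1
  have h3 := Real.tendsto_exp_atBot.comp h2
  refine h3.congr (fun t => ?_)
  simp [neg_mul]

lemma MainF_tendsto {a : ℝ} (ha0 : 0 < a) (ha1 : a < 1) :
    Tendsto (fun t => MainF a t) atTop (nhds 1) := by
  have hp := tendsto_exp_coef (show (0:ℝ) < 1 - a by linarith)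
  have hq := tendsto_exp_coef ha0
  have hb : Tendsto (fun t : ℝ => 1 - exp (-(1-a)*t)) atTop (nhds 1) := by
    simpa using (hp.const_sub 1)
  have hqq : Tendsto (fun t : ℝ => 1 - exp (-a*t)) atTop (nhds 1) := by
    simpa using (hq.const_sub 1)
  have hpq : Tendsto (fun t : ℝ => exp (-(1-a)*t) * exp (-a*t)) atTop (nhds 0) := by
    simpa using hp.mul hq
  have hc : Tendsto (fun t : ℝ => 1 - exp (-(1-a)*t) * exp (-a*t)) atTop (nhds 1) := by
    simpa using hpq.const_sub 1
  have t1 : Tendsto (fun t => -(2*(1 - exp (-(1-a)*t))^2*(1-a))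
      /((1 - exp (-a*t))^2*(1 - exp (-(1-a)*t)))) atTop (nhds (-(2*1^2*(1-a))/(1^2*1))) := by
    exact (((hb.pow 2).const_mul 2 |>.mul_const (1-a)).neg).div
      (((hqq.pow 2)).mul hb) (by norm_num)
  have t2 : Tendsto (fun t => (2*(1 - exp (-(1-a)*t))^2* exp (-a*t))
      /((1 - exp (-a*t))^2*(1 - exp (-(1-a)*t)*exp (-a*t)))) atTop (nhds ((2*1^2*0)/(1^2*1))) := by
    exact (((hb.pow 2).const_mul 2).mul hq).div ((hqq.pow 2).mul hc) (by norm_num)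
  have t3 : Tendsto (fun t => (2 - exp (-(1-a)*t) - exp (-(1-a)*t)*exp (-a*t))
      /((1 - exp (-a*t))*(1 - exp (-(1-a)*t)*exp (-a*t)))) atTop (nhds ((2-0-0)/(1*1))) := by
    exact ((hp.const_sub 2).sub hpq).div (hqq.mul hc) (by norm_num)
  have hsum := ((t1.add t2).add t3).div_const (2*a)
  have hval : ((-(2*1^2*(1-a))/(1^2*1)) + (2*1^2*0)/(1^2*1) + (2-0-0)/(1*1)) / (2*a) = 1 := by
    field_simp
    ring
  rw [hval] at hsum
  exact hsum.congr (fun t => rfl)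

lemma ErrF_tendsto {a : ℝ} (ha0 : 0 < a) (ha1 : a < 1) :
    Tendsto (fun t => ErrF a t) atTop (nhds 0) := by
  have hp := tendsto_exp_coef (show (0:ℝ) < 1 - a by linarith)
  have hq := tendsto_exp_coef ha0
  have hbound : ∀ᶠ t in atTop, |ErrF a t| ≤ (216/a) * (1/t) := by
    have h1 : ∀ᶠ t in atTop, exp (-(1-a)*t) < 1/2 := hp.eventually_lt_const (by norm_num)
    have h2 : ∀ᶠ t in atTop, exp (-a*t) < 1/2 := hq.eventually_lt_const (by norm_num)
    filter_upwards [h1, h2, eventually_ge_atTop (1:ℝ)] with t hpt hqt ht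
    have ht0 : (0:ℝ) < t := lt_of_lt_of_le one_pos ht
    set p := exp (-(1-a)*t) with hpdef
    set q := exp (-a*t) with hqdef
    have hp0 : 0 < p := Real.exp_pos _
    have hq0 : 0 < q := Real.exp_pos _
    have hq1 : (1:ℝ)/2 ≤ 1 - q := by linarith
    have hb1 : 1 - p < 1 := by linarith
    have hb0 : 0 ≤ 1 - p := by linarith
    have hc1 : 1 - p * q < 1 := by nlinarith
    have hc0 : (0:ℝ) ≤ 1 - p * q := by nlinarith
    have hM := (Mint_facts hb0 hb1 hc0 hc1).2
    have hJ := (Jint_facts hc0 hc1).2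
    have hJabs : |Jint (1 - p * q)| ≤ 48 := by
      rw [abs_of_nonneg hJ.1]; exact hJ.2
    -- coefficient bounds
    have hco1 : |(-(2*(1 - p)^2)/(1 - q))| ≤ 4 := by
      rw [abs_div, abs_of_pos (by linarith : (0:ℝ) < 1 - q)]
      rw [div_le_iff₀ (by linarith)]
      rw [abs_neg, abs_of_nonneg (by positivity)]
      nlinarith
    have hco2 : |p - (2 - p - p*q)/(1 - q)| ≤ 9/2 := by
      have hfr0 : 0 ≤ (2 - p - p*q)/(1 - q) := div_nonneg (by nlinarith) (by linarith)
      have hfr4 : (2 - p - p*q)/(1 - q) ≤ 4 := by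
        rw [div_le_iff₀ (by linarith)]
        nlinarith
      rw [abs_le]
      constructor <;> nlinarith
    have hnum : |(-(2*(1 - p)^2)/(1 - q)) * Mint (1-p) (1-p*q)
        + (p - (2 - p - p*q)/(1 - q)) * Jint (1-p*q)| ≤ 432 := by
      calc |(-(2*(1 - p)^2)/(1 - q)) * Mint (1-p) (1-p*q)
          + (p - (2 - p - p*q)/(1 - q)) * Jint (1-p*q)|
          ≤ |(-(2*(1 - p)^2)/(1 - q)) * Mint (1-p) (1-p*q)|
            + |(p - (2 - p - p*q)/(1 - q)) * Jint (1-p*q)| := abs_add_le _ _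
        _ = |(-(2*(1 - p)^2)/(1 - q))| * |Mint (1-p) (1-p*q)|
            + |p - (2 - p - p*q)/(1 - q)| * |Jint (1-p*q)| := by rw [abs_mul, abs_mul]
        _ ≤ 4 * 48 + (9/2) * 48 :=
            add_le_add (mul_le_mul hco1 hM (abs_nonneg _) (by norm_num))
              (mul_le_mul hco2 hJabs (abs_nonneg _) (by norm_num))
        _ ≤ 432 := by norm_num
    have : ErrF a t = ((-(2*(1 - p)^2)/(1 - q)) * Mint (1-p) (1-p*q)
        + (p - (2 - p - p*q)/(1 - q)) * Jint (1-p*q)) / (2*a*t) := rfl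
    rw [this, abs_div, abs_of_pos (by positivity : (0:ℝ) < 2*a*t)]
    rw [div_le_iff₀ (by positivity)]
    have : (216/a) * (1/t) * (2*a*t) = 432 := by field_simp; ring
    rw [this]
    exact hnum
  have hz : Tendsto (fun t : ℝ => (216/a) * (1/t)) atTop (nhds 0) := by
    have h : Tendsto (fun t : ℝ => t⁻¹) atTop (nhds 0) := tendsto_inv_atTop_zero
    have := h.const_mul (216/a)
    simpa [one_div] using this
  apply squeeze_zero_norm' ?_ hz
  filter_upwards [hbound] with t ht
  simpa using ht


/-- As `t → ∞`, the expected overlap of BBM at infinite temperature satisfies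
`E[ν_{0,t}([a,1])] ∼ 2·a·t·e^{−at}` for every fixed `a ∈ (0,1)`. Equivalently, with
`q = e^{−at}` and `p = e^{−(1−a)t}`, the quantity
`pq ∫₀^∞ u e^{−u}(1+(1−p)e^{−u}) / ((1−(1−p)e^{−u})(1−(1−pq)e^{−u})²) du`
is asymptotically equivalent to `2 q log(1/q) = 2·a·t·e^{−at}` as `t → ∞`. -/
theorem stmt8 (a : ℝ) (ha : a ∈ Set.Ioo (0 : ℝ) 1) :
    Tendsto (fun t : ℝ =>
      (Real.exp (-(1 - a) * t) * Real.exp (-a * t) *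
        ∫ u in Set.Ioi (0 : ℝ),
          u * Real.exp (-u) * (1 + (1 - Real.exp (-(1 - a) * t)) * Real.exp (-u)) /
            ((1 - (1 - Real.exp (-(1 - a) * t)) * Real.exp (-u)) *
              (1 - (1 - Real.exp (-(1 - a) * t) * Real.exp (-a * t)) * Real.exp (-u)) ^ 2))
        / (2 * a * t * Real.exp (-a * t)))
      atTop (nhds 1) := by
  obtain ⟨ha0, ha1⟩ := ha
  have hM := MainF_tendsto ha0 ha1
  have hE := ErrF_tendsto ha0 ha1
  have hsum := hM.add hE
  rw [add_zero] at hsum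
  apply Tendsto.congr' ?_ hsum
  filter_upwards [eventually_ge_atTop (1:ℝ)] with t ht
  exact (key_eq a ha0 ha1 t ht).symm
end

section
/- Let (B_t)_{t≥0} be a standard Brownian motion. For every δ > 0 there exists C_δ > 0 such that for all x, y ≥ 0 and all t ≥ 1, P(sup_{s∈[0,t]} B_s ≤ x, B_t ∈ [x−y, x−y+δ]) ≤ (C_δ · x · y / t^{3/2}) · (e^{−(x−y)²/(2t)} + e^{−(x−y+δ)²/(2t)}). -/
open MeasureTheory ProbabilityTheory
open MeasureTheory ProbabilityTheory Set Real
open scoped NNReal ENNReal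

lemma gauss_sym (v : ℝ≥0) : (gaussianReal 0 v).map (fun x : ℝ => -x) = gaussianReal 0 v := by
  have h : (fun x : ℝ => -x) = (fun x : ℝ => (-1 : ℝ) * x) := by funext x; ring
  rw [h, gaussianReal_map_const_mul]
  have : (⟨(-1 : ℝ)^2, sq_nonneg _⟩ : ℝ≥0) = 1 := by ext; norm_num
  congr 1
  · simp
  · ext; simp

lemma refl_eq {Ω E : Type*} [MeasurableSpace Ω] [MeasurableSpace E]
    (μ : Measure Ω) [IsProbabilityMeasure μ]
    (V : Ω → E) (R : Ω → ℝ) (hV : Measurable V) (hR : Measurable R)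
    (hind : IndepFun V R μ) (hsym : μ.map R = μ.map (fun ω => -R ω))
    (M : Set E) (hM : MeasurableSet M) (g : E → ℝ) (hg : Measurable g)
    (K : Set ℝ) (hK : MeasurableSet K) :
    μ {ω | V ω ∈ M ∧ g (V ω) + R ω ∈ K} = μ {ω | V ω ∈ M ∧ g (V ω) - R ω ∈ K} := by
  have hmap : μ.map (fun ω => (V ω, R ω)) = (μ.map V).prod (μ.map R) :=
    (indepFun_iff_map_prod_eq_prod_map_map hV.aemeasurable hR.aemeasurable).mp hind
  have hsym' : (μ.map R).map (fun r : ℝ => -r) = μ.map R := by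
    rw [Measure.map_map measurable_neg hR]
    exact hsym.symm
  set C : Set (E × ℝ) := {p | p.1 ∈ M ∧ g p.1 + p.2 ∈ K} with hC
  set C' : Set (E × ℝ) := {p | p.1 ∈ M ∧ g p.1 - p.2 ∈ K} with hC'
  have hCm : MeasurableSet C := by
    apply MeasurableSet.inter
    · exact measurable_fst hM
    · exact ((hg.comp measurable_fst).add measurable_snd) hK
  have hC'm : MeasurableSet C' := by
    apply MeasurableSet.inter
    · exact measurable_fst hM
    · exact ((hg.comp measurable_fst).sub measurable_snd) hK
  have h1 : μ {ω | V ω ∈ M ∧ g (V ω) + R ω ∈ K} = ((μ.map V).prod (μ.map R)) C := by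
    rw [← hmap, Measure.map_apply (hV.prodMk hR) hCm]; rfl
  have h2 : μ {ω | V ω ∈ M ∧ g (V ω) - R ω ∈ K} = ((μ.map V).prod (μ.map R)) C' := by
    rw [← hmap, Measure.map_apply (hV.prodMk hR) hC'm]; rfl
  rw [h1, h2, Measure.prod_apply hCm, Measure.prod_apply hC'm]
  apply lintegral_congr
  intro a
  by_cases ha : a ∈ M
  · have e1 : Prod.mk a ⁻¹' C = {r : ℝ | g a + r ∈ K} := by
      ext r; simp [hC, ha]
    have e2 : Prod.mk a ⁻¹' C' = {r : ℝ | g a - r ∈ K} := by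
      ext r; simp [hC', ha]
    rw [e1, e2]
    have e3 : {r : ℝ | g a - r ∈ K} = (fun r : ℝ => -r) ⁻¹' {r : ℝ | g a + r ∈ K} := by
      ext r; simp [sub_eq_add_neg]
    have hSm : MeasurableSet {r : ℝ | g a + r ∈ K} := (measurable_const.add measurable_id) hK
    rw [e3, ← Measure.map_apply measurable_neg hSm, hsym']
  · have e1 : Prod.mk a ⁻¹' C = ∅ := by ext r; simp [hC, ha]
    have e2 : Prod.mk a ⁻¹' C' = ∅ := by ext r; simp [hC', ha]
    rw [e1, e2]

lemma gauss_tail (v : ℝ≥0) (hv : v ≠ 0) (ε : ℝ) (hε : 0 ≤ ε) :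
    gaussianReal 0 v (Ioi ε) ≤ ENNReal.ofReal (Real.exp (-ε^2/(2*(v:ℝ)))) := by
  have hv' : (0:ℝ) < (v:ℝ) := by
    have := hv
    positivity
  rw [gaussianReal_apply 0 hv]
  have hb : ∀ u ∈ Ioi ε, gaussianPDF 0 v u ≤
      ENNReal.ofReal (Real.exp (-ε^2/(2*(v:ℝ)))) * gaussianPDF ε v u := by
    intro u hu
    simp only [mem_Ioi] at hu
    rw [gaussianPDF, gaussianPDF, ← ENNReal.ofReal_mul (Real.exp_nonneg _)]
    apply ENNReal.ofReal_le_ofReal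
    rw [gaussianPDFReal, gaussianPDFReal]
    rw [show Real.exp (-ε^2/(2*(v:ℝ))) * ((√(2 * π * v))⁻¹ * rexp (- (u - ε)^2 / (2 * v)))
      = (√(2 * π * v))⁻¹ * (rexp (-ε^2/(2*(v:ℝ))) * rexp (- (u - ε)^2 / (2 * v))) by ring,
      ← Real.exp_add]
    apply mul_le_mul_of_nonneg_left _ (by positivity)
    rw [Real.exp_le_exp]
    rw [← add_div, div_le_div_iff_of_pos_right (by positivity)]
    nlinarith [mul_nonneg hε (le_of_lt (sub_pos.mpr hu))]
  calc ∫⁻ u in Ioi ε, gaussianPDF 0 v u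
      ≤ ∫⁻ u in Ioi ε, ENNReal.ofReal (Real.exp (-ε^2/(2*(v:ℝ)))) * gaussianPDF ε v u := by
        apply setLIntegral_mono (by exact (measurable_gaussianPDF ε v).const_mul _) hb
    _ ≤ ∫⁻ u, ENNReal.ofReal (Real.exp (-ε^2/(2*(v:ℝ)))) * gaussianPDF ε v u := by
        exact setLIntegral_le_lintegral _ _
    _ = ENNReal.ofReal (Real.exp (-ε^2/(2*(v:ℝ)))) := by
        rw [lintegral_const_mul _ (measurable_gaussianPDF _ _), lintegral_gaussianPDF_eq_one _ hv,
          mul_one]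

lemma gauss_interval (v : ℝ≥0) (hv : v ≠ 0) (hv1 : 1 ≤ (v:ℝ)) (a b : ℝ) :
    gaussianReal 0 v (Icc a b) ≤ ENNReal.ofReal (b - a) := by
  rw [gaussianReal_apply 0 hv]
  have hb : ∀ u ∈ Icc a b, gaussianPDF 0 v u ≤ 1 := by
    intro u hu
    rw [gaussianPDF]
    refine le_trans (ENNReal.ofReal_le_ofReal ?_) ENNReal.ofReal_one.le
    rw [gaussianPDFReal]
    have h1 : (1:ℝ) ≤ √(2 * π * v) := by
      rw [show (1:ℝ) = √1 by simp]
      apply Real.sqrt_le_sqrt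
      nlinarith [Real.pi_gt_three]
    calc (√(2 * π * v))⁻¹ * rexp (- (u - 0)^2 / (2 * v))
        ≤ 1 * 1 := by
          apply mul_le_mul
          · rw [inv_le_one_iff₀]; right; exact h1
          · apply Real.exp_le_one_iff.mpr
            have : (0:ℝ) < (v:ℝ) := by positivity
            apply div_nonpos_of_nonpos_of_nonneg <;> nlinarith [sq_nonneg (u-0)]
          · positivity
          · norm_num
      _ = 1 := by norm_num
  calc ∫⁻ u in Icc a b, gaussianPDF 0 v u ≤ ∫⁻ _ in Icc a b, 1 :=
        setLIntegral_mono measurable_const hb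
    _ = volume (Icc a b) := by simp
    _ ≤ ENNReal.ofReal (b - a) := by rw [Real.volume_Icc]

lemma indep_VR {Ω : Type*} [MeasurableSpace Ω] (μ : Measure Ω) (B : ℝ → Ω → ℝ)
    (hmeas : ∀ t, Measurable (B t))
    (hind : ∀ (n : ℕ) (t : Fin (n + 1) → ℝ), Monotone t → (∀ i, 0 ≤ t i) →
      iIndepFun
        (fun i : Fin n => fun ω => B (t i.succ) ω - B (t i.castSucc) ω) μ)
    (T : ℝ) (hT : 0 < T) (n k : ℕ) (hk : k ≤ n) (hn : 0 < n) :
    IndepFun (fun ω (j : Fin k) => B (((j:ℕ)+1)*T/n) ω - B ((j:ℕ)*T/n) ω)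
             (fun ω => B T ω - B ((k:ℕ)*T/n) ω) μ := by
  set u : Fin (k + 2) → ℝ := fun i => if (i:ℕ) ≤ k then (i:ℕ)*T/n else T with hu
  have hn' : (0:ℝ) < (n:ℝ) := by exact_mod_cast hn
  have hgrid : ∀ m : ℕ, m ≤ n → (m:ℝ)*T/n ≤ T := by
    intro m hm
    rw [div_le_iff₀ hn']
    have : (m:ℝ) ≤ (n:ℝ) := by exact_mod_cast hm
    nlinarith
  have hmono : Monotone u := by
    intro i i' hii'
    simp only [hu]
    by_cases h1 : (i:ℕ) ≤ k <;> by_cases h2 : (i':ℕ) ≤ k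
    · simp only [h1, h2, if_true]
      have hii : ((i:ℕ):ℝ) ≤ ((i':ℕ):ℝ) := by exact_mod_cast hii'
      gcongr
    · simp only [h1, h2, if_true, if_false]
      exact hgrid i (le_trans h1 hk)
    · omega
    · simp [h1, h2, le_refl]
  have hpos : ∀ i, 0 ≤ u i := by
    intro i
    simp only [hu]
    split
    · positivity
    · exact hT.le
  have hY := hind (k+1) u hmono hpos
  set Y : Fin (k+1) → Ω → ℝ := fun i ω => B (u i.succ) ω - B (u i.castSucc) ω with hYdef
  have hYmeas : ∀ i, Measurable (Y i) := fun i => (hmeas _).sub (hmeas _)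
  set S : Finset (Fin (k+1)) := Finset.univ.filter (fun i => (i:ℕ) < k) with hS
  set T' : Finset (Fin (k+1)) := {Fin.last k} with hT'
  have hdisj : Disjoint S T' := by
    rw [Finset.disjoint_singleton_right, hS]
    simp [Fin.last]
  have hfin := hY.indepFun_finset S T' hdisj hYmeas
  set φ : ({x // x ∈ S} → ℝ) → (Fin k → ℝ) := fun q j =>
    q ⟨⟨(j:ℕ), by omega⟩, by simp [hS, j.isLt]⟩ with hφ
  set ψ : ({x // x ∈ T'} → ℝ) → ℝ := fun q => q ⟨Fin.last k, by simp [hT']⟩ with hψ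
  have hφm : Measurable φ := measurable_pi_lambda _ (fun j => measurable_pi_apply _)
  have hψm : Measurable ψ := measurable_pi_apply _
  have hcomp := hfin.comp hφm hψm
  have e1 : (φ ∘ fun a (i : {x // x ∈ S}) => Y i a)
      = (fun ω (j : Fin k) => B (((j:ℕ)+1)*T/n) ω - B ((j:ℕ)*T/n) ω) := by
    funext ω j
    simp only [Function.comp, hφ, hYdef, hu]
    have h1 : ((⟨(j:ℕ), by omega⟩ : Fin (k+1)).succ : ℕ) = (j:ℕ)+1 := rfl
    have h2 : ((⟨(j:ℕ), by omega⟩ : Fin (k+1)).castSucc : ℕ) = (j:ℕ) := rfl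
    rw [h1, h2]
    have hj1 : (j:ℕ)+1 ≤ k := j.isLt
    have hj2 : (j:ℕ) ≤ k := le_of_lt j.isLt
    simp only [hj1, hj2, if_true]
    push_cast
    ring_nf
  have e2 : (ψ ∘ fun a (i : {x // x ∈ T'}) => Y i a)
      = (fun ω => B T ω - B ((k:ℕ)*T/n) ω) := by
    funext ω
    simp only [Function.comp, hψ, hYdef, hu]
    have h1 : (((Fin.last k) : Fin (k+1)).succ : ℕ) = k+1 := rfl
    have h2 : (((Fin.last k) : Fin (k+1)).castSucc : ℕ) = k := rfl
    rw [h1, h2]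
    simp only [Nat.add_one_le_iff, lt_irrefl, le_refl, if_true, if_false, Nat.lt_succ_self]
  rw [e1, e2] at hcomp
  exact hcomp

lemma sfun_eq (k m : ℕ) (hm : m ≤ k) (f : ℕ → ℝ) :
    (∑ j : Fin k, if (j:ℕ) < m then (f ((j:ℕ)+1) - f (j:ℕ)) else 0) = f m - f 0 := by
  rw [Fin.sum_univ_eq_sum_range (fun j => if j < m then (f (j+1) - f j) else 0) k]
  rw [← Finset.sum_subset (Finset.range_subset_range.mpr hm)
    (fun j _ hj => if_neg (by simp_all [Finset.mem_range]))]
  rw [Finset.sum_congr rfl (fun j hj => if_pos (Finset.mem_range.mp hj))]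
  exact Finset.sum_range_sub f m
lemma discrete_step {Ω : Type*} [MeasurableSpace Ω] (μ : Measure Ω) [IsProbabilityMeasure μ]
    (B : ℝ → Ω → ℝ) (hmeas : ∀ t, Measurable (B t))
    (hlaw : ∀ s t : ℝ, 0 ≤ s → s ≤ t →
      Measure.map (fun ω => B t ω - B s ω) μ = gaussianReal 0 (Real.toNNReal (t - s)))
    (hind : ∀ (n : ℕ) (t : Fin (n + 1) → ℝ), Monotone t → (∀ i, 0 ≤ t i) →
      iIndepFun
        (fun i : Fin n => fun ω => B (t i.succ) ω - B (t i.castSucc) ω) μ)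
    (T x ε b c : ℝ) (hT : 0 < T) (hx : 0 ≤ x) (hε : 0 < ε) (hc : c ≤ x)
    (n : ℕ) (hn : 0 < n) :
    μ {ω | (∀ m ∈ Finset.Icc 1 n, B ((m:ℕ)*T/n) ω - B 0 ω ≤ x) ∧
        B T ω - B 0 ω ∈ Set.Icc b c}
      + μ {ω | B T ω - B 0 ω ∈ Set.Icc (2*x-c+2*ε) (2*x-b)}
    ≤ μ {ω | B T ω - B 0 ω ∈ Set.Icc b c}
      + ∑ j ∈ Finset.range n, μ {ω | ε < B (((j:ℕ)+1)*T/n) ω - B ((j:ℕ)*T/n) ω} := by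
  have hn' : (0:ℝ) < (n:ℝ) := by exact_mod_cast hn
  set W : ℕ → Ω → ℝ := fun m ω => B ((m:ℕ)*T/n) ω - B 0 ω with hW
  set X : ℕ → Ω → ℝ := fun j ω => B (((j:ℕ)+1)*T/n) ω - B ((j:ℕ)*T/n) ω with hX
  have hWmeas : ∀ m, Measurable (W m) := fun m => (hmeas _).sub (hmeas _)
  have hXmeas : ∀ j, Measurable (X j) := fun j => (hmeas _).sub (hmeas _)
  have hTn : ((n:ℝ))*T/n = T := by field_simp
  have hWn : W n = fun ω => B T ω - B 0 ω := by funext ω; rw [hW]; simp [hTn]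
  have hW0 : ∀ ω, W 0 ω = 0 := by intro ω; simp [hW]
  have hXW : ∀ j ω, X j ω = W (j+1) ω - W j ω := by
    intro j ω; simp only [hX, hW]; push_cast; ring
  -- events
  set Jev : Set Ω := {ω | W n ω ∈ Set.Icc b c} with hJev
  set Kev : Set Ω := {ω | W n ω ∈ Set.Icc (2*x-c+2*ε) (2*x-b)} with hKev
  set U : Set Ω := {ω | (∀ m ∈ Finset.Icc 1 n, W m ω ≤ x) ∧ W n ω ∈ Set.Icc b c} with hU
  set A : ℕ → Set Ω := fun k =>
    {ω | (∀ m, 1 ≤ m → m < k → W m ω ≤ x) ∧ x < W k ω} with hA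
  set A' : ℕ → Set Ω := fun k => A k ∩ {ω | W k ω ≤ x + ε} with hA'
  have hJm : MeasurableSet Jev := (hWmeas n) measurableSet_Icc
  have hKm : MeasurableSet Kev := (hWmeas n) measurableSet_Icc
  have hallm : ∀ k, MeasurableSet {ω | ∀ m, 1 ≤ m → m < k → W m ω ≤ x} := by
    intro k
    have : {ω | ∀ m, 1 ≤ m → m < k → W m ω ≤ x}
        = ⋂ m, ⋂ (_ : 1 ≤ m), ⋂ (_ : m < k), {ω | W m ω ≤ x} := by
      ext ω; simp
    rw [this]
    exact MeasurableSet.iInter fun m => MeasurableSet.iInter fun _ =>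
      MeasurableSet.iInter fun _ => measurableSet_le (hWmeas m) measurable_const
  have hAm : ∀ k, MeasurableSet (A k) := by
    intro k
    exact (hallm k).inter (measurableSet_lt measurable_const (hWmeas k))
  have hA'm : ∀ k, MeasurableSet (A' k) := by
    intro k
    exact (hAm k).inter (measurableSet_le (hWmeas k) measurable_const)
  have hUm : MeasurableSet U := by
    have : U = {ω | ∀ m, 1 ≤ m → m ≤ n → W m ω ≤ x} ∩ Jev := by
      ext ω; simp [hU, hJev, Finset.mem_Icc]
    rw [this]
    have h2 : {ω | ∀ m, 1 ≤ m → m ≤ n → W m ω ≤ x}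
        = ⋂ m, ⋂ (_ : 1 ≤ m), ⋂ (_ : m ≤ n), {ω | W m ω ≤ x} := by ext ω; simp
    rw [h2]
    exact (MeasurableSet.iInter fun m => MeasurableSet.iInter fun _ =>
      MeasurableSet.iInter fun _ => measurableSet_le (hWmeas m) measurable_const).inter hJm
  -- step h3 : Kev is covered by first-crossing events
  have hgrid : ∀ m : ℕ, m ≤ n → (m:ℝ)*T/n ≤ T := by
    intro m hm
    rw [div_le_iff₀ hn']
    have : (m:ℝ) ≤ (n:ℝ) := by exact_mod_cast hm
    nlinarith
  have h3 : μ Kev ≤ ∑ k ∈ Finset.Icc 1 n, μ (A k ∩ Kev) := by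
    have hcov : Kev ⊆ ⋃ k ∈ Finset.Icc 1 n, (A k ∩ Kev) := by
      intro ω hω
      have hWn' : x < W n ω := by
        have h1 : 2*x-c+2*ε ≤ W n ω := hω.1
        linarith
      have hex : ∃ m, x < W m ω := ⟨n, hWn'⟩
      set k := Nat.find hex with hkdef
      have hspec : x < W k ω := Nat.find_spec hex
      have hkn : k ≤ n := Nat.find_min' hex hWn'
      have hk1 : 1 ≤ k := by
        by_contra h
        push_neg at h
        interval_cases k
        rw [hW0] at hspec
        linarith
      refine Set.mem_biUnion ?_ ⟨⟨?_, hspec⟩, hω⟩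
      · exact Finset.mem_Icc.mpr ⟨hk1, hkn⟩
      · intro m hm1 hmk
        by_contra hcon
        push_neg at hcon
        exact Nat.find_min hex hmk hcon
    calc μ Kev ≤ μ (⋃ k ∈ Finset.Icc 1 n, (A k ∩ Kev)) := measure_mono hcov
      _ ≤ ∑ k ∈ Finset.Icc 1 n, μ (A k ∩ Kev) := measure_biUnion_finset_le _ _
  -- step h4 : overshoot control
  have h4 : ∀ k ∈ Finset.Icc 1 n,
      μ (A k ∩ Kev) ≤ μ (A' k ∩ Kev) + μ {ω | ε < X (k-1) ω} := by
    intro k hk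
    rw [Finset.mem_Icc] at hk
    have hincl : A k ∩ Kev ⊆ (A' k ∩ Kev) ∪ {ω | ε < X (k-1) ω} := by
      intro ω hω
      by_cases h : W k ω ≤ x + ε
      · exact Or.inl ⟨⟨hω.1, h⟩, hω.2⟩
      · push_neg at h
        right
        have hprev : W (k-1) ω ≤ x := by
          rcases Nat.eq_or_lt_of_le hk.1 with h1 | h1
          · rw [← h1]
            norm_num
            rw [hW0]
            exact hx
          · exact hω.1.1 (k-1) (by omega) (by omega)
        have hXk : X (k-1) ω = W k ω - W (k-1) ω := by
          rw [hXW]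
          congr 2
          omega
        simp only [Set.mem_setOf_eq]
        rw [hXk]
        linarith
    calc μ (A k ∩ Kev) ≤ μ ((A' k ∩ Kev) ∪ {ω | ε < X (k-1) ω}) := measure_mono hincl
      _ ≤ μ (A' k ∩ Kev) + μ {ω | ε < X (k-1) ω} := measure_union_le _ _
  -- step h5 : reflection
  have h5 : ∀ k ∈ Finset.Icc 1 n, μ (A' k ∩ Kev) ≤ μ (A k ∩ Jev) := by
    intro k hk
    rw [Finset.mem_Icc] at hk
    obtain ⟨hk1, hkn⟩ := hk
    set V : Ω → (Fin k → ℝ) := fun ω j => X (j:ℕ) ω with hV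
    have hVmeas : Measurable V := measurable_pi_lambda _ (fun j => hXmeas _)
    set R : Ω → ℝ := fun ω => B T ω - B ((k:ℝ)*T/n) ω with hR
    have hRmeas : Measurable R := (hmeas _).sub (hmeas _)
    set sfun : ℕ → (Fin k → ℝ) → ℝ :=
      fun m p => ∑ j : Fin k, if (j:ℕ) < m then p j else 0 with hsfun
    have hsfm : ∀ m, Measurable (sfun m) := by
      intro m
      apply Finset.measurable_sum
      intro j _
      by_cases h : (j:ℕ) < m
      · simpa [h] using measurable_pi_apply j
      · simp only [h, if_false]
        exact measurable_const
    have hkey : ∀ m, m ≤ k → ∀ ω, sfun m (V ω) = W m ω := by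
      intro m hm ω
      have hXf : ∀ j : ℕ, (fun i : ℕ => B ((i:ℝ)*T/n) ω) (j+1) - (fun i : ℕ => B ((i:ℝ)*T/n) ω) j
          = X j ω := by
        intro j
        simp only [hX]
        push_cast
        ring_nf
      have := sfun_eq k m hm (fun i : ℕ => B ((i:ℝ)*T/n) ω)
      simp only [hXf] at this
      rw [hsfun]
      simp only [hV]
      rw [this]
      simp only [hW]
      norm_num
    set M : Set (Fin k → ℝ) :=
      {p | (∀ m, 1 ≤ m → m < k → sfun m p ≤ x) ∧ x < sfun k p ∧ sfun k p ≤ x + ε} with hM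
    have hMm : MeasurableSet M := by
      have : M = (⋂ m, ⋂ (_ : 1 ≤ m), ⋂ (_ : m < k), {p | sfun m p ≤ x})
          ∩ ({p | x < sfun k p} ∩ {p | sfun k p ≤ x + ε}) := by
        ext p; simp [hM]
      rw [this]
      exact ((MeasurableSet.iInter fun m => MeasurableSet.iInter fun _ =>
        MeasurableSet.iInter fun _ => measurableSet_le (hsfm m) measurable_const).inter
        ((measurableSet_lt measurable_const (hsfm k)).inter
          (measurableSet_le (hsfm k) measurable_const)))
    have hVR : IndepFun V R μ := by
      have := indep_VR μ B hmeas hind T hT n k hkn hn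
      exact this
    have hsym : μ.map R = μ.map (fun ω => -R ω) := by
      have h1 : μ.map R = gaussianReal 0 (Real.toNNReal (T - (k:ℝ)*T/n)) := by
        apply hlaw ((k:ℝ)*T/n) T (by positivity) (hgrid k hkn)
      have h2 : μ.map (fun ω => -R ω) = (μ.map R).map (fun r : ℝ => -r) := by
        rw [Measure.map_map measurable_neg hRmeas]
        rfl
      rw [h2, h1, gauss_sym]
    have heq := refl_eq μ V R hVmeas hRmeas hVR hsym M hMm (sfun k) (hsfm k)
      (Set.Icc (2*x-c+2*ε) (2*x-b)) measurableSet_Icc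
    have hWkV : ∀ ω, sfun k (V ω) = W k ω := fun ω => hkey k le_rfl ω
    have hWnR : ∀ ω, W k ω + R ω = W n ω := by
      intro ω
      simp only [hW, hR, hWn]
      rw [hTn]
      ring
    have hset1 : {ω | V ω ∈ M ∧ sfun k (V ω) + R ω ∈ Set.Icc (2*x-c+2*ε) (2*x-b)}
        = A' k ∩ Kev := by
      ext ω
      simp only [hM, Set.mem_setOf_eq, hA', hA, Set.mem_inter_iff, hKev]
      constructor
      · rintro ⟨⟨hp1, hp2, hp3⟩, hp4⟩
        rw [hWkV, hWnR] at hp4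
        refine ⟨⟨⟨fun m h1 h2 => ?_, ?_⟩, ?_⟩, hp4⟩
        · rw [← hkey m (le_of_lt h2) ω]; exact hp1 m h1 h2
        · rw [← hWkV]; exact hp2
        · rw [← hWkV]; exact hp3
      · rintro ⟨⟨⟨hp1, hp2⟩, hp3⟩, hp4⟩
        rw [← hWnR, ← hWkV ω] at hp4
        exact ⟨⟨fun m h1 h2 => by rw [hkey m (le_of_lt h2) ω]; exact hp1 m h1 h2,
          by rw [hWkV]; exact hp2, by rw [hWkV]; exact hp3⟩, hp4⟩
    have hset2 : {ω | V ω ∈ M ∧ sfun k (V ω) - R ω ∈ Set.Icc (2*x-c+2*ε) (2*x-b)}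
        ⊆ A k ∩ Jev := by
      rintro ω ⟨⟨hp1, hp2, hp3⟩, hp4⟩
      rw [hWkV] at hp2 hp3 hp4
      have hRval : R ω = W n ω - W k ω := by rw [← hWnR ω]; ring
      rw [hRval] at hp4
      obtain ⟨hq1, hq2⟩ := hp4
      constructor
      · refine ⟨fun m h1 h2 => ?_, hp2⟩
        rw [← hkey m (le_of_lt h2) ω]
        exact hp1 m h1 h2
      · constructor
        · linarith
        · linarith
    calc μ (A' k ∩ Kev) = μ {ω | V ω ∈ M ∧ sfun k (V ω) + R ω ∈ Set.Icc (2*x-c+2*ε) (2*x-b)} := by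
          rw [hset1]
      _ = μ {ω | V ω ∈ M ∧ sfun k (V ω) - R ω ∈ Set.Icc (2*x-c+2*ε) (2*x-b)} := heq
      _ ≤ μ (A k ∩ Jev) := measure_mono hset2
  -- step h6 : disjointness
  have h6 : μ U + ∑ k ∈ Finset.Icc 1 n, μ (A k ∩ Jev) ≤ μ Jev := by
    have hpd : (↑(Finset.Icc 1 n) : Set ℕ).Pairwise (Function.onFun Disjoint (fun k => A k ∩ Jev)) := by
      intro k hk k' hk' hne
      simp only [Finset.coe_Icc, Set.mem_Icc] at hk hk'
      rcases lt_or_gt_of_ne hne with h | h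
      · rw [Function.onFun]
        rw [Set.disjoint_left]
        rintro ω ⟨⟨_, hw2⟩, _⟩ ⟨⟨hw1', _⟩, _⟩
        exact absurd (hw1' k hk.1 h) (not_le.mpr hw2)
      · rw [Function.onFun]
        rw [Set.disjoint_left]
        rintro ω ⟨⟨hw1, _⟩, _⟩ ⟨⟨_, hw2'⟩, _⟩
        exact absurd (hw1 k' hk'.1 h) (not_le.mpr hw2')
    have hDsum : μ (⋃ k ∈ Finset.Icc 1 n, (A k ∩ Jev)) = ∑ k ∈ Finset.Icc 1 n, μ (A k ∩ Jev) :=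
      measure_biUnion_finset hpd (fun k _ => (hAm k).inter hJm)
    have hUD : Disjoint U (⋃ k ∈ Finset.Icc 1 n, (A k ∩ Jev)) := by
      rw [Set.disjoint_left]
      rintro ω ⟨hw1, _⟩ hw2
      rw [Set.mem_iUnion₂] at hw2
      obtain ⟨k, hk, ⟨⟨_, hxk⟩, _⟩⟩ := hw2
      exact absurd (hw1 k hk) (not_le.mpr hxk)
    have hsub : U ∪ (⋃ k ∈ Finset.Icc 1 n, (A k ∩ Jev)) ⊆ Jev := by
      apply Set.union_subset
      · intro ω hω; exact hω.2
      · apply Set.iUnion₂_subset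
        intro k hk
        exact Set.inter_subset_right
    calc μ U + ∑ k ∈ Finset.Icc 1 n, μ (A k ∩ Jev)
        = μ U + μ (⋃ k ∈ Finset.Icc 1 n, (A k ∩ Jev)) := by rw [hDsum]
      _ = μ (U ∪ ⋃ k ∈ Finset.Icc 1 n, (A k ∩ Jev)) := by
          rw [measure_union hUD (MeasurableSet.biUnion (Finset.countable_toSet _)
            (fun k _ => (hAm k).inter hJm))]
      _ ≤ μ Jev := measure_mono hsub
  -- reindex tails
  have hreidx : ∑ k ∈ Finset.Icc 1 n, μ {ω | ε < X (k-1) ω}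
      = ∑ j ∈ Finset.range n, μ {ω | ε < X j ω} := by
    apply Finset.sum_nbij' (fun k => k - 1) (fun j => j + 1)
    · intro k hk; rw [Finset.mem_Icc] at hk; rw [Finset.mem_range]; omega
    · intro j hj; rw [Finset.mem_range] at hj; rw [Finset.mem_Icc]; omega
    · intro k hk; rw [Finset.mem_Icc] at hk; omega
    · intro j hj; omega
    · intro k hk; rfl
  -- final chain
  have hBT : ∀ ω, B T ω - B 0 ω = W n ω := by
    intro ω
    simp only [hW]
    rw [hTn]
  have hUeq : {ω | (∀ m ∈ Finset.Icc 1 n, B ((m:ℕ)*T/n) ω - B 0 ω ≤ x) ∧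
      B T ω - B 0 ω ∈ Set.Icc b c} = U := by
    ext ω
    simp only [hU, Set.mem_setOf_eq]
    rw [hBT ω]
  have hKeq : {ω | B T ω - B 0 ω ∈ Set.Icc (2*x-c+2*ε) (2*x-b)} = Kev := by
    ext ω
    simp only [hKev, Set.mem_setOf_eq]
    rw [hBT ω]
  have hJeq : {ω | B T ω - B 0 ω ∈ Set.Icc b c} = Jev := by
    ext ω
    simp only [hJev, Set.mem_setOf_eq]
    rw [hBT ω]
  rw [hUeq, hKeq, hJeq]
  calc μ U + μ Kev ≤ μ U + ∑ k ∈ Finset.Icc 1 n, μ (A k ∩ Kev) := add_le_add le_rfl h3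
    _ ≤ μ U + ∑ k ∈ Finset.Icc 1 n, (μ (A' k ∩ Kev) + μ {ω | ε < X (k-1) ω}) :=
        add_le_add le_rfl (Finset.sum_le_sum h4)
    _ = μ U + (∑ k ∈ Finset.Icc 1 n, μ (A' k ∩ Kev)
        + ∑ k ∈ Finset.Icc 1 n, μ {ω | ε < X (k-1) ω}) := by rw [Finset.sum_add_distrib]
    _ ≤ μ U + (∑ k ∈ Finset.Icc 1 n, μ (A k ∩ Jev)
        + ∑ k ∈ Finset.Icc 1 n, μ {ω | ε < X (k-1) ω}) :=
        add_le_add le_rfl (add_le_add (Finset.sum_le_sum h5) le_rfl)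
    _ = (μ U + ∑ k ∈ Finset.Icc 1 n, μ (A k ∩ Jev))
        + ∑ k ∈ Finset.Icc 1 n, μ {ω | ε < X (k-1) ω} := by rw [add_assoc]
    _ ≤ μ Jev + ∑ k ∈ Finset.Icc 1 n, μ {ω | ε < X (k-1) ω} := add_le_add h6 le_rfl
    _ = μ Jev + ∑ j ∈ Finset.range n, μ {ω | ε < X j ω} := by rw [hreidx]
lemma exp_quad {z : ℝ} (hz : 0 ≤ z) : z^2/4 ≤ Real.exp z := by
  have h := Real.add_one_le_exp (z/2)
  have h2 : Real.exp z = Real.exp (z/2) * Real.exp (z/2) := by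
    rw [← Real.exp_add]; ring_nf
  nlinarith [Real.exp_pos (z/2)]

lemma exp_bound {t b δ u : ℝ} (ht : 1 ≤ t) (hδ : 0 < δ) (hu1 : b ≤ u) (hu2 : u ≤ b + δ) :
    Real.exp (-u^2/(2*t)) ≤ Real.exp (δ^2/2)
      * (Real.exp (-b^2/(2*t)) + Real.exp (-(b+δ)^2/(2*t))) := by
  have ht' : (0:ℝ) < t := lt_of_lt_of_le one_pos ht
  have hone : (1:ℝ) ≤ Real.exp (δ^2/2) := Real.one_le_exp (by positivity)
  rcases le_or_gt 0 b with hb | hb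
  · have h1 : Real.exp (-u^2/(2*t)) ≤ Real.exp (-b^2/(2*t)) := by
      rw [Real.exp_le_exp, div_le_div_iff_of_pos_right (by positivity : (0:ℝ) < 2*t)]
      nlinarith
    nlinarith [Real.exp_pos (-(b+δ)^2/(2*t)), Real.exp_pos (-b^2/(2*t))]
  · rcases le_or_gt (b+δ) 0 with hbd | hbd
    · have h1 : Real.exp (-u^2/(2*t)) ≤ Real.exp (-(b+δ)^2/(2*t)) := by
        rw [Real.exp_le_exp, div_le_div_iff_of_pos_right (by positivity : (0:ℝ) < 2*t)]
        nlinarith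
      nlinarith [Real.exp_pos (-(b+δ)^2/(2*t)), Real.exp_pos (-b^2/(2*t))]
    · have h1 : Real.exp (-u^2/(2*t)) ≤ 1 := by
        apply Real.exp_le_one_iff.mpr
        have : 0 ≤ u^2 := sq_nonneg u
        apply div_nonpos_of_nonpos_of_nonneg (by nlinarith) (by positivity)
      have h2 : Real.exp (-(δ^2)/(2*t)) ≤ Real.exp (-b^2/(2*t)) := by
        rw [Real.exp_le_exp, div_le_div_iff_of_pos_right (by positivity : (0:ℝ) < 2*t)]
        nlinarith
      have h3 : Real.exp (-(δ^2)/2) ≤ Real.exp (-(δ^2)/(2*t)) := by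
        rw [Real.exp_le_exp]
        rw [neg_div, neg_div, neg_le_neg_iff]
        apply div_le_div_of_nonneg_left (by positivity) (by positivity) (by nlinarith)
      have h4 : (1:ℝ) ≤ Real.exp (δ^2/2) * Real.exp (-b^2/(2*t)) := by
        have := Real.exp_pos (δ^2/2)
        have h5 : Real.exp (δ^2/2) * Real.exp (-(δ^2)/2) = 1 := by
          rw [← Real.exp_add]; ring_nf; exact Real.exp_zero
        nlinarith
      nlinarith [Real.exp_pos (-(b+δ)^2/(2*t)), Real.exp_pos (-b^2/(2*t))]
lemma pdf_cont (v : ℝ≥0) : Continuous (gaussianPDFReal 0 v) := by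
  rw [gaussianPDFReal_def]
  fun_prop

set_option maxHeartbeats 1000000 in
lemma gauss_diff (t x y δ : ℝ) (ht : 1 ≤ t) (hx : 0 ≤ x) (hy : 0 ≤ y) (hδ : 0 < δ) :
    (gaussianReal 0 (Real.toNNReal t) (Set.Icc (x-y) (x-y+min y δ))).toReal
      - (gaussianReal 0 (Real.toNNReal t)
          (Set.Icc (2*x-(x-y+min y δ)) (2*x-(x-y)))).toReal
    ≤ 2*δ*Real.exp (δ^2/2) * x * y / t^((3:ℝ)/2)
        * (Real.exp (-(x-y)^2/(2*t)) + Real.exp (-(x-y+δ)^2/(2*t))) := by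
  have ht' : (0:ℝ) < t := lt_of_lt_of_le one_pos ht
  set b := x - y with hb
  set η := min y δ with hη
  set c := b + η with hc
  have hη0 : 0 ≤ η := le_min hy hδ.le
  have hηδ : η ≤ δ := min_le_right _ _
  have hbc : b ≤ c := by simp [hc]; linarith
  have hcx : c ≤ x := by
    have : η ≤ y := min_le_left _ _
    simp only [hc, hb]; linarith
  set v := Real.toNNReal t with hv
  have hvne : v ≠ 0 := by
    simp [hv, Real.toNNReal_eq_zero]; linarith
  have hvr : (v:ℝ) = t := Real.coe_toNNReal t ht'.le
  set f := gaussianPDFReal 0 v with hf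
  have hfc : Continuous f := pdf_cont v
  have hfnn : ∀ u, 0 ≤ f u := fun u => gaussianPDFReal_nonneg 0 v u
  set E : ℝ := Real.exp (-(x-y)^2/(2*t)) + Real.exp (-(x-y+δ)^2/(2*t)) with hE
  have hE0 : 0 ≤ E := by positivity
  -- express as integrals
  have hJ : (gaussianReal 0 v (Set.Icc b c)).toReal = ∫ u in b..c, f u := by
    rw [gaussianReal_apply_eq_integral 0 hvne, ENNReal.toReal_ofReal
      (setIntegral_nonneg measurableSet_Icc (fun u _ => hfnn u))]
    rw [MeasureTheory.integral_Icc_eq_integral_Ioc, intervalIntegral.integral_of_le hbc]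
  have hbc' : 2*x - c ≤ 2*x - b := by linarith
  have hK : (gaussianReal 0 v (Set.Icc (2*x-c) (2*x-b))).toReal = ∫ u in b..c, f (2*x - u) := by
    rw [gaussianReal_apply_eq_integral 0 hvne, ENNReal.toReal_ofReal
      (setIntegral_nonneg measurableSet_Icc (fun u _ => hfnn u))]
    rw [MeasureTheory.integral_Icc_eq_integral_Ioc, ← intervalIntegral.integral_of_le hbc']
    rw [intervalIntegral.integral_comp_sub_left f (2*x)]
  set D : ℝ := (Real.sqrt (2*Real.pi*t))⁻¹ * (Real.exp (δ^2/2) * E) * (2*x*y/t) with hD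
  have hD0 : 0 ≤ D := by positivity
  have hint1 : IntervalIntegrable f volume b c := hfc.intervalIntegrable _ _
  have hint2 : IntervalIntegrable (fun u => f (2*x - u)) volume b c :=
    (hfc.comp (by continuity)).intervalIntegrable _ _
  have hpt : ∀ u ∈ Set.Icc b c, f u - f (2*x - u) ≤ D := by
    intro u hu
    obtain ⟨hu1, hu2⟩ := hu
    have hux : u ≤ x := le_trans hu2 hcx
    have huy : x - u ≤ y := by simp only [hb] at hu1; linarith
    set S := (Real.sqrt (2*Real.pi*t))⁻¹ with hS
    have hS0 : 0 ≤ S := by positivity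
    have hfu : ∀ w : ℝ, f w = S * Real.exp (-w^2/(2*t)) := by
      intro w
      simp only [hf, gaussianPDFReal, hS, hvr, sub_zero]
    have hw0 : 0 ≤ 2*x*(x-u)/t := by
      apply div_nonneg _ ht'.le
      nlinarith
    have hsplit : Real.exp (-(2*x-u)^2/(2*t))
        = Real.exp (-u^2/(2*t)) * Real.exp (-(2*x*(x-u)/t)) := by
      rw [← Real.exp_add]
      congr 1
      field_simp
      ring
    have h1exp : 1 - Real.exp (-(2*x*(x-u)/t)) ≤ 2*x*(x-u)/t := by
      have := Real.add_one_le_exp (-(2*x*(x-u)/t))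
      linarith
    have hexpb : Real.exp (-u^2/(2*t)) ≤ Real.exp (δ^2/2) * E := by
      rw [hE]
      exact exp_bound ht hδ hu1 (by simp only [hc] at hu2; linarith)
    have hwy : 2*x*(x-u)/t ≤ 2*x*y/t := by
      rw [div_le_div_iff_of_pos_right ht']
      nlinarith
    calc f u - f (2*x - u) = S * (Real.exp (-u^2/(2*t)) - Real.exp (-(2*x-u)^2/(2*t))) := by
          rw [hfu, hfu]; ring
      _ = S * (Real.exp (-u^2/(2*t)) * (1 - Real.exp (-(2*x*(x-u)/t)))) := by
          rw [hsplit]; ring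
      _ ≤ S * ((Real.exp (δ^2/2) * E) * (2*x*y/t)) := by
          apply mul_le_mul_of_nonneg_left _ hS0
          apply mul_le_mul hexpb (le_trans h1exp hwy) ?_ (by positivity)
          · have h5 : Real.exp (-(2*x*(x-u)/t)) ≤ 1 := by
              apply Real.exp_le_one_iff.mpr
              linarith
            linarith
      _ = D := by rw [hD]; ring
  have hmain : (∫ u in b..c, f u) - (∫ u in b..c, f (2*x - u)) ≤ δ * D := by
    rw [← intervalIntegral.integral_sub hint1 hint2]
    calc ∫ u in b..c, (f u - f (2*x - u))
        ≤ ∫ _ in b..c, D := by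
          apply intervalIntegral.integral_mono_on hbc (hint1.sub hint2)
            intervalIntegrable_const hpt
      _ = (c - b) * D := by rw [intervalIntegral.integral_const, smul_eq_mul]
      _ ≤ δ * D := by
          apply mul_le_mul_of_nonneg_right _ hD0
          simp only [hc]; linarith
  have hpow : t^((3:ℝ)/2) = t * Real.sqrt t := by
    rw [show (3:ℝ)/2 = 1 + 1/2 by norm_num, Real.rpow_add ht', Real.rpow_one,
      ← Real.sqrt_eq_rpow]
  have hfin : δ * D ≤ 2*δ*Real.exp (δ^2/2) * x * y / t^((3:ℝ)/2) * E := by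
    have hsq : Real.sqrt t ≤ Real.sqrt (2*Real.pi*t) := by
      apply Real.sqrt_le_sqrt
      nlinarith [Real.pi_gt_three]
    have hden : t^((3:ℝ)/2) ≤ Real.sqrt (2*Real.pi*t) * t := by
      rw [hpow]
      nlinarith [Real.sqrt_nonneg t]
    have hpos1 : (0:ℝ) < t^((3:ℝ)/2) := by positivity
    have hpos2 : (0:ℝ) < Real.sqrt (2*Real.pi*t) * t := by
      have : (0:ℝ) < Real.sqrt (2*Real.pi*t) := Real.sqrt_pos.mpr (by positivity)
      positivity
    have hinv : (Real.sqrt (2*Real.pi*t) * t)⁻¹ ≤ (t^((3:ℝ)/2))⁻¹ := by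
      apply inv_anti₀ hpos1 hden
    calc δ * D = (2*δ*Real.exp (δ^2/2) * x * y * E) * (Real.sqrt (2*Real.pi*t) * t)⁻¹ := by
          rw [hD]
          field_simp
      _ ≤ (2*δ*Real.exp (δ^2/2) * x * y * E) * (t^((3:ℝ)/2))⁻¹ := by
          apply mul_le_mul_of_nonneg_left hinv (by positivity)
      _ = 2*δ*Real.exp (δ^2/2) * x * y / t^((3:ℝ)/2) * E := by
          field_simp
  calc (gaussianReal 0 v (Set.Icc b c)).toReal
        - (gaussianReal 0 v (Set.Icc (2*x-c) (2*x-b))).toReal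
      = (∫ u in b..c, f u) - (∫ u in b..c, f (2*x - u)) := by rw [hJ, hK]
    _ ≤ δ * D := hmain
    _ ≤ _ := hfin


/-- A standard one-dimensional Brownian motion started at `0`: measurable marginals,
`B 0 = 0` a.s., continuous paths, Gaussian increments `B t − B s ∼ N(0, t−s)`, and
independent increments. -/
def IsBrownianMotion {Ω : Type*} [MeasurableSpace Ω] (μ : Measure Ω)
    (B : ℝ → Ω → ℝ) : Prop :=
  (∀ t, Measurable (B t)) ∧
  (∀ᵐ ω ∂μ, B 0 ω = 0) ∧
  (∀ ω, Continuous fun t => B t ω) ∧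
  (∀ s t : ℝ, 0 ≤ s → s ≤ t →
    Measure.map (fun ω => B t ω - B s ω) μ = gaussianReal 0 (Real.toNNReal (t - s))) ∧
  (∀ (n : ℕ) (t : Fin (n + 1) → ℝ), Monotone t → (∀ i, 0 ≤ t i) →
    iIndepFun
      (fun i : Fin n => fun ω => B (t i.succ) ω - B (t i.castSucc) ω) μ)

/-- For a standard Brownian motion `B`, for every `δ > 0` there exists `C_δ > 0` such that
for all `x, y ≥ 0` and all `t ≥ 1`,
`P(sup_{s∈[0,t]} B_s ≤ x, B_t ∈ [x−y, x−y+δ])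
  ≤ (C_δ x y / t^{3/2}) (e^{−(x−y)²/(2t)} + e^{−(x−y+δ)²/(2t)})`. -/
theorem stmt11 {Ω : Type*} [MeasurableSpace Ω] (μ : Measure Ω) [IsProbabilityMeasure μ]
    (B : ℝ → Ω → ℝ) (hB : IsBrownianMotion μ B) (δ : ℝ) (hδ : 0 < δ) :
    ∃ C : ℝ, 0 < C ∧ ∀ x y t : ℝ, 0 ≤ x → 0 ≤ y → 1 ≤ t →
      (μ {ω | (∀ s ∈ Set.Icc (0 : ℝ) t, B s ω ≤ x) ∧
          B t ω ∈ Set.Icc (x - y) (x - y + δ)}).toReal ≤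
        C * x * y / t ^ ((3 : ℝ) / 2) *
          (Real.exp (-(x - y) ^ 2 / (2 * t)) + Real.exp (-(x - y + δ) ^ 2 / (2 * t))) := by
  obtain ⟨hmeas, h0, hcont, hlaw, hind⟩ := hB
  refine ⟨2*δ*Real.exp (δ^2/2), by positivity, ?_⟩
  intro x y t hx hy ht
  have ht' : (0:ℝ) < t := lt_of_lt_of_le one_pos ht
  set b := x - y with hb
  set η := min y δ with hη
  set c := b + η with hc
  have hη0 : 0 ≤ η := le_min hy hδ.le
  have hηy : η ≤ y := min_le_left _ _
  have hηδ : η ≤ δ := min_le_right _ _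
  have hbc : b ≤ c := by simp only [hc]; linarith
  have hcx : c ≤ x := by simp only [hc, hb]; linarith
  set v := Real.toNNReal t with hv
  have hvne : v ≠ 0 := by
    simp only [hv, ne_eq, Real.toNNReal_eq_zero, not_le]; linarith
  have hvr : (v:ℝ) = t := Real.coe_toNNReal t ht'.le
  have hv1 : 1 ≤ (v:ℝ) := by rw [hvr]; exact ht
  set Ev := {ω | (∀ s ∈ Set.Icc (0 : ℝ) t, B s ω ≤ x) ∧
      B t ω ∈ Set.Icc b (b + δ)} with hEv
  have hN : μ {ω | ¬ B 0 ω = 0} = 0 := by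
    exact ae_iff.mp h0
  -- step 0 : reduce to discrete events
  have step0 : ∀ n : ℕ, 0 < n →
      μ Ev ≤ μ {ω | (∀ m ∈ Finset.Icc 1 n, B ((m:ℕ)*t/n) ω - B 0 ω ≤ x) ∧
        B t ω - B 0 ω ∈ Set.Icc b c} := by
    intro n hn
    have hn' : (0:ℝ) < (n:ℝ) := by exact_mod_cast hn
    have hsub : Ev ⊆ {ω | (∀ m ∈ Finset.Icc 1 n, B ((m:ℕ)*t/n) ω - B 0 ω ≤ x) ∧
        B t ω - B 0 ω ∈ Set.Icc b c} ∪ {ω | ¬ B 0 ω = 0} := by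
      intro ω hω
      by_cases hB0 : B 0 ω = 0
      · left
        obtain ⟨hω1, hω2⟩ := hω
        constructor
        · intro m hm
          rw [Finset.mem_Icc] at hm
          have hmem : (m:ℝ)*t/n ∈ Set.Icc (0:ℝ) t := by
            constructor
            · positivity
            · rw [div_le_iff₀ hn']
              have : (m:ℝ) ≤ (n:ℝ) := by exact_mod_cast hm.2
              nlinarith
          rw [hB0]
          have := hω1 _ hmem
          linarith
        · have h1 : B t ω ≤ x := hω1 t ⟨ht'.le, le_refl t⟩
          have h2 : b ≤ B t ω := hω2.1
          have h3 : B t ω ≤ b + δ := hω2.2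
          rw [hB0, sub_zero]
          refine ⟨h2, ?_⟩
          rcases min_cases y δ with ⟨he, _⟩ | ⟨he, _⟩
          · simp only [hc, hη, he, hb]; linarith
          · simp only [hc, hη, he, hb]; linarith
      · right; exact hB0
    calc μ Ev ≤ μ ({ω | (∀ m ∈ Finset.Icc 1 n, B ((m:ℕ)*t/n) ω - B 0 ω ≤ x) ∧
          B t ω - B 0 ω ∈ Set.Icc b c} ∪ {ω | ¬ B 0 ω = 0}) := measure_mono hsub
      _ ≤ μ {ω | (∀ m ∈ Finset.Icc 1 n, B ((m:ℕ)*t/n) ω - B 0 ω ≤ x) ∧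
          B t ω - B 0 ω ∈ Set.Icc b c} + μ {ω | ¬ B 0 ω = 0} := measure_union_le _ _
      _ = μ {ω | (∀ m ∈ Finset.Icc 1 n, B ((m:ℕ)*t/n) ω - B 0 ω ≤ x) ∧
          B t ω - B 0 ω ∈ Set.Icc b c} := by rw [hN, add_zero]
  -- laws
  have hmeasBt : Measurable fun ω => B t ω - B 0 ω := (hmeas t).sub (hmeas 0)
  have glaw : μ.map (fun ω => B t ω - B 0 ω) = gaussianReal 0 v := by
    have := hlaw 0 t le_rfl ht'.le
    rwa [sub_zero] at this
  have hgev : ∀ S : Set ℝ, MeasurableSet S →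
      μ {ω | B t ω - B 0 ω ∈ S} = gaussianReal 0 v S := by
    intro S hS
    rw [← glaw, Measure.map_apply hmeasBt hS]
    rfl
  -- key inequality for every ε and n
  have key : ∀ ε : ℝ, 0 < ε → ∀ n : ℕ, 0 < n →
      (μ Ev).toReal ≤ (gaussianReal 0 v (Set.Icc b c)).toReal
        - (gaussianReal 0 v (Set.Icc (2*x-c+2*ε) (2*x-b))).toReal
        + n * Real.exp (-ε^2*n/(2*t)) := by
    intro ε hε n hn
    have hn' : (0:ℝ) < (n:ℝ) := by exact_mod_cast hn
    have dd := discrete_step μ B hmeas hlaw hind t x ε b c ht' hx hε hcx n hn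
    have htail : ∀ j ∈ Finset.range n,
        μ {ω | ε < B (((j:ℕ)+1)*t/n) ω - B ((j:ℕ)*t/n) ω}
          ≤ ENNReal.ofReal (Real.exp (-ε^2*n/(2*t))) := by
      intro j _
      have h1 : (0:ℝ) ≤ (j:ℝ)*t/n := by positivity
      have h2 : (j:ℝ)*t/n ≤ ((j:ℝ)+1)*t/n := by
        gcongr
        linarith
      have hmap := hlaw _ _ h1 h2
      have harg : ((j:ℝ)+1)*t/n - (j:ℝ)*t/n = t/n := by ring
      rw [harg] at hmap
      have hevt : {ω | ε < B (((j:ℕ)+1)*t/n) ω - B ((j:ℕ)*t/n) ω}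
          = (fun ω => B (((j:ℕ)+1)*t/n) ω - B ((j:ℕ)*t/n) ω) ⁻¹' (Set.Ioi ε) := rfl
      rw [hevt, ← Measure.map_apply (f := fun ω => B (((j:ℕ)+1)*t/n) ω - B ((j:ℕ)*t/n) ω) ((hmeas _).sub (hmeas _)) measurableSet_Ioi, hmap]
      have htn : (0:ℝ) < t/n := by positivity
      have h3 : Real.toNNReal (t/n) ≠ 0 := by
        simp only [ne_eq, Real.toNNReal_eq_zero, not_le]
        exact htn
      refine le_trans (gauss_tail _ h3 ε hε.le) (ENNReal.ofReal_le_ofReal (le_of_eq ?_))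
      rw [Real.coe_toNNReal _ htn.le]
      congr 1
      rw [div_eq_div_iff (by positivity) (by positivity)]
      field_simp
    have sumtail : ∑ j ∈ Finset.range n, μ {ω | ε < B (((j:ℕ)+1)*t/n) ω - B ((j:ℕ)*t/n) ω}
        ≤ (n:ℝ≥0∞) * ENNReal.ofReal (Real.exp (-ε^2*n/(2*t))) := by
      calc ∑ j ∈ Finset.range n, μ {ω | ε < B (((j:ℕ)+1)*t/n) ω - B ((j:ℕ)*t/n) ω}
          ≤ ∑ _j ∈ Finset.range n, ENNReal.ofReal (Real.exp (-ε^2*n/(2*t))) :=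
            Finset.sum_le_sum htail
        _ = (n:ℝ≥0∞) * ENNReal.ofReal (Real.exp (-ε^2*n/(2*t))) := by
            rw [Finset.sum_const, Finset.card_range, nsmul_eq_mul]
    have dd2 := le_trans dd (add_le_add le_rfl sumtail)
    rw [hgev (Set.Icc (2*x-c+2*ε) (2*x-b)) measurableSet_Icc,
      hgev (Set.Icc b c) measurableSet_Icc] at dd2
    have hmulne : (n:ℝ≥0∞) * ENNReal.ofReal (Real.exp (-ε^2*n/(2*t))) ≠ ⊤ :=
      ENNReal.mul_ne_top (ENNReal.natCast_ne_top n) ENNReal.ofReal_ne_top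
    have hRHSne : gaussianReal 0 v (Set.Icc b c)
        + (n:ℝ≥0∞) * ENNReal.ofReal (Real.exp (-ε^2*n/(2*t))) ≠ ⊤ :=
      ENNReal.add_ne_top.mpr ⟨measure_ne_top _ _, hmulne⟩
    have hmono := ENNReal.toReal_mono hRHSne dd2
    rw [ENNReal.toReal_add (measure_ne_top _ _) (measure_ne_top _ _),
      ENNReal.toReal_add (measure_ne_top _ _) hmulne, ENNReal.toReal_mul,
      ENNReal.toReal_natCast, ENNReal.toReal_ofReal (Real.exp_nonneg _)] at hmono
    have h0' := ENNReal.toReal_mono (measure_ne_top _ _) (step0 n hn)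
    linarith
  -- ε gap for the reflected interval
  have gap : ∀ ε : ℝ, 0 < ε →
      (gaussianReal 0 v (Set.Icc (2*x-c) (2*x-b))).toReal
        ≤ (gaussianReal 0 v (Set.Icc (2*x-c+2*ε) (2*x-b))).toReal + 2*ε := by
    intro ε hε
    have hsub : Set.Icc (2*x-c) (2*x-b)
        ⊆ Set.Icc (2*x-c+2*ε) (2*x-b) ∪ Set.Icc (2*x-c) (2*x-c+2*ε) := by
      intro u hu
      by_cases h : 2*x-c+2*ε ≤ u
      · exact Or.inl ⟨h, hu.2⟩
      · exact Or.inr ⟨hu.1, le_of_not_ge h⟩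
    have hgap : gaussianReal 0 v (Set.Icc (2*x-c) (2*x-c+2*ε)) ≤ ENNReal.ofReal (2*ε) := by
      refine le_trans (gauss_interval v hvne hv1 _ _) (ENNReal.ofReal_le_ofReal ?_)
      linarith
    have h1 : gaussianReal 0 v (Set.Icc (2*x-c) (2*x-b))
        ≤ gaussianReal 0 v (Set.Icc (2*x-c+2*ε) (2*x-b)) + ENNReal.ofReal (2*ε) := by
      calc gaussianReal 0 v (Set.Icc (2*x-c) (2*x-b))
          ≤ gaussianReal 0 v (Set.Icc (2*x-c+2*ε) (2*x-b) ∪ Set.Icc (2*x-c) (2*x-c+2*ε)) :=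
            measure_mono hsub
        _ ≤ gaussianReal 0 v (Set.Icc (2*x-c+2*ε) (2*x-b))
            + gaussianReal 0 v (Set.Icc (2*x-c) (2*x-c+2*ε)) := measure_union_le _ _
        _ ≤ gaussianReal 0 v (Set.Icc (2*x-c+2*ε) (2*x-b)) + ENNReal.ofReal (2*ε) :=
            add_le_add le_rfl hgap
    have hne : gaussianReal 0 v (Set.Icc (2*x-c+2*ε) (2*x-b)) + ENNReal.ofReal (2*ε) ≠ ⊤ :=
      ENNReal.add_ne_top.mpr ⟨measure_ne_top _ _, ENNReal.ofReal_ne_top⟩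
    have := ENNReal.toReal_mono hne h1
    rwa [ENNReal.toReal_add (measure_ne_top _ _) ENNReal.ofReal_ne_top,
      ENNReal.toReal_ofReal (by linarith)] at this
  -- limit
  have hQ : (μ Ev).toReal ≤ (gaussianReal 0 v (Set.Icc b c)).toReal
      - (gaussianReal 0 v (Set.Icc (2*x-c) (2*x-b))).toReal := by
    apply le_of_forall_pos_le_add
    intro θ hθ
    set ε := θ/4 with hεdef
    have hε : 0 < ε := by positivity
    set n := max 1 (Nat.ceil (32*t^2/(ε^4*θ))) with hndef
    have hn : 0 < n := lt_of_lt_of_le one_pos (le_max_left _ _)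
    have hn' : (0:ℝ) < (n:ℝ) := by exact_mod_cast hn
    have hnge : 32*t^2/(ε^4*θ) ≤ (n:ℝ) := by
      refine le_trans (Nat.le_ceil _) ?_
      have h9 : Nat.ceil (32*t^2/(ε^4*θ)) ≤ n := le_max_right _ _
      exact_mod_cast h9
    have htail2 : (n:ℝ) * Real.exp (-ε^2*n/(2*t)) ≤ θ/2 := by
      have hz : (0:ℝ) < ε^2*n/(2*t) := by positivity
      have hq := exp_quad hz.le
      have hexp : Real.exp (-(ε^2*(n:ℝ)/(2*t))) ≤ 4/(ε^2*(n:ℝ)/(2*t))^2 := by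
        rw [Real.exp_neg]
        have h1 : (0:ℝ) < (ε^2*(n:ℝ)/(2*t))^2/4 := by positivity
        calc (Real.exp (ε^2*(n:ℝ)/(2*t)))⁻¹ ≤ ((ε^2*(n:ℝ)/(2*t))^2/4)⁻¹ :=
              inv_anti₀ h1 hq
          _ = 4/(ε^2*(n:ℝ)/(2*t))^2 := by rw [inv_div]
      have harg : -ε^2*(n:ℝ)/(2*t) = -(ε^2*(n:ℝ)/(2*t)) := by ring
      have hbound : 32*t^2 ≤ (n:ℝ)*(ε^4*θ) := by
        have := (div_le_iff₀ (by positivity : (0:ℝ) < ε^4*θ)).mp hnge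
        linarith
      calc (n:ℝ) * Real.exp (-ε^2*(n:ℝ)/(2*t))
          = (n:ℝ) * Real.exp (-(ε^2*(n:ℝ)/(2*t))) := by rw [harg]
        _ ≤ (n:ℝ) * (4/(ε^2*(n:ℝ)/(2*t))^2) := mul_le_mul_of_nonneg_left hexp hn'.le
        _ = 16*t^2/(ε^4*(n:ℝ)) := by
            field_simp
            ring
        _ ≤ θ/2 := by
            rw [div_le_iff₀ (by positivity)]
            nlinarith
    have hkey := key ε hε n hn
    have hgap := gap ε hε
    linarith
  calc (μ Ev).toReal ≤ (gaussianReal 0 v (Set.Icc b c)).toReal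
      - (gaussianReal 0 v (Set.Icc (2*x-c) (2*x-b))).toReal := hQ
    _ ≤ 2*δ*Real.exp (δ^2/2) * x * y / t^((3:ℝ)/2)
        * (Real.exp (-b^2/(2*t)) + Real.exp (-(b+δ)^2/(2*t))) := by
        have := gauss_diff t x y δ ht hx hy hδ
        simpa only [← hb, ← hη, ← hc, ← hv] using this
end

section
/- Let B be a standard Brownian motion and k ≥ 1 an integer. Writing τ_k = inf{s : B_s = k}, for all t ≥ 1 one has ∫₀^t (k e^{−k²/(2s)} / ((t−s+1)^{3/2} s^{3/2})) ds ≤ C k t^{−3/2} e^{−k²/(2t)} for some absolute constant C > 0, using that ∫₀^t s^{−3/2} e^{−k²/(2s)} ds ≤ (C/k) e^{−k²/(4t)} and ∫₀^∞ (s+1)^{−3/2} ds < ∞. -/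
open MeasureTheory

private lemma exp_neg_le_aux (u : ℝ) (hu : 0 < u) : Real.exp (-u) ≤ 4 / u ^ 2 := by
  have h := Real.add_one_le_exp (u / 2)
  have h2 : Real.exp u = Real.exp (u / 2) * Real.exp (u / 2) := by
    rw [← Real.exp_add]; ring_nf
  have h3 : u ^ 2 / 4 ≤ Real.exp u := by nlinarith
  have h4 := Real.exp_pos u
  rw [Real.exp_neg, inv_le_iff_one_le_mul₀ h4, div_mul_eq_mul_div, le_div_iff₀ (by positivity)]
  nlinarith

set_option maxHeartbeats 1000000 in
/-- Convolution estimate for the Brownian hitting-time density of level `k ≥ 1`: for all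
`t ≥ 1`, `∫₀^t k e^{−k²/(2s)} / ((t−s+1)^{3/2} s^{3/2}) ds ≤ C k t^{−3/2} e^{−k²/(2t)}`
for an absolute constant `C > 0`. -/
theorem stmt16 :
    ∃ C : ℝ, 0 < C ∧ ∀ k : ℕ, 1 ≤ k → ∀ t : ℝ, 1 ≤ t →
      ∫ s in Set.Ioc (0 : ℝ) t,
          (k : ℝ) * Real.exp (-(k : ℝ) ^ 2 / (2 * s)) /
            ((t - s + 1) ^ ((3 : ℝ) / 2) * s ^ ((3 : ℝ) / 2)) ≤
        C * k * t ^ (-(3 : ℝ) / 2) * Real.exp (-(k : ℝ) ^ 2 / (2 * t)) := by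
  refine ⟨600, by norm_num, ?_⟩
  intro k hk t ht
  have hK : (1 : ℝ) ≤ (k : ℝ) := by exact_mod_cast hk
  have hK0 : (0 : ℝ) < (k : ℝ) := lt_of_lt_of_le one_pos hK
  have ht0 : (0 : ℝ) < t := lt_of_lt_of_le one_pos ht
  set E : ℝ := Real.exp (-(k : ℝ) ^ 2 / (2 * t)) with hE
  have hE0 : 0 < E := Real.exp_pos _
  set M : ℝ := (k : ℝ) * (t / 2) ^ (-(3 : ℝ) / 2) * E with hM
  have hM0 : 0 < M := by
    have : (0 : ℝ) < (t / 2) ^ (-(3 : ℝ) / 2) := Real.rpow_pos_of_pos (by positivity) _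
    positivity
  set m : ℝ → ℝ := fun s => min (s ^ ((1 : ℝ) / 2)) (s ^ (-(3 : ℝ) / 2)) with hm
  set h : ℝ → ℝ := fun s => (t - s + 1) ^ (-(3 : ℝ) / 2) with hh
  have hmeas_m : Measurable m := by fun_prop
  have hmeas_h : Measurable h := by fun_prop
  -- nonnegativity and boundedness of `m` and `h` on the interval
  have hm_nonneg : ∀ s ∈ Set.Ioc (0 : ℝ) t, 0 ≤ m s := fun s hs =>
    le_min (Real.rpow_nonneg hs.1.le _) (Real.rpow_nonneg hs.1.le _)
  have hm_le : ∀ s ∈ Set.Ioc (0 : ℝ) t, m s ≤ 1 := by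
    intro s hs
    rcases le_or_gt s 1 with hs1 | hs1
    · exact (min_le_left _ _).trans (Real.rpow_le_one hs.1.le hs1 (by norm_num))
    · exact (min_le_right _ _).trans
        (Real.rpow_le_one_of_one_le_of_nonpos hs1.le (by norm_num))
  have hh_nonneg : ∀ s ∈ Set.Ioc (0 : ℝ) t, 0 ≤ h s := fun s hs =>
    Real.rpow_nonneg (by linarith [hs.1, hs.2]) _
  have hh_le : ∀ s ∈ Set.Ioc (0 : ℝ) t, h s ≤ 1 := fun s hs =>
    Real.rpow_le_one_of_one_le_of_nonpos (by linarith [hs.2]) (by norm_num)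
  -- integrability on subsets of Ioc 0 t
  have hboundint : IntegrableOn (fun _ : ℝ => (1 : ℝ)) (Set.Ioc (0 : ℝ) t) :=
    integrableOn_const measure_Ioc_lt_top.ne
  have hint_m : IntegrableOn m (Set.Ioc (0 : ℝ) t) := by
    refine hboundint.mono' hmeas_m.aestronglyMeasurable ?_
    filter_upwards [ae_restrict_mem measurableSet_Ioc] with s hs
    rw [Real.norm_eq_abs, abs_of_nonneg (hm_nonneg s hs)]
    exact hm_le s hs
  have hint_h : IntegrableOn h (Set.Ioc (0 : ℝ) t) := by
    refine hboundint.mono' hmeas_h.aestronglyMeasurable ?_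
    filter_upwards [ae_restrict_mem measurableSet_Ioc] with s hs
    rw [Real.norm_eq_abs, abs_of_nonneg (hh_nonneg s hs)]
    exact hh_le s hs
  have hint_G : IntegrableOn (fun s => M * (64 * m s + h s)) (Set.Ioc (0 : ℝ) t) :=
    ((hint_m.const_mul 64).add hint_h).const_mul M
  -- the pointwise bound
  have key : ∀ s ∈ Set.Ioc (0 : ℝ) t,
      (k : ℝ) * Real.exp (-(k : ℝ) ^ 2 / (2 * s)) /
          ((t - s + 1) ^ ((3 : ℝ) / 2) * s ^ ((3 : ℝ) / 2)) ≤ M * (64 * m s + h s) := by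
    rintro s ⟨hs0, hst⟩
    have hts1 : (1 : ℝ) ≤ t - s + 1 := by linarith
    have hts0 : (0 : ℝ) < t - s + 1 := by linarith
    have hmnn : 0 ≤ m s := le_min (Real.rpow_nonneg hs0.le _) (Real.rpow_nonneg hs0.le _)
    have hhnn : 0 ≤ h s := Real.rpow_nonneg (by linarith) _
    have hPpos : (0 : ℝ) < (t / 2) ^ ((3 : ℝ) / 2) := Real.rpow_pos_of_pos (by positivity) _
    have hPinv : (t / 2) ^ (-(3 : ℝ) / 2) = ((t / 2) ^ ((3 : ℝ) / 2))⁻¹ := by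
      rw [neg_div, Real.rpow_neg (by positivity)]
    have hSpos : (0 : ℝ) < s ^ ((3 : ℝ) / 2) := Real.rpow_pos_of_pos hs0 _
    have hk2 : (1 : ℝ) ≤ (k : ℝ) ^ 2 := by nlinarith
    rcases le_or_gt s (t / 2) with hcase | hcase
    · -- `s ≤ t/2`
      have hA : (t / 2) ^ ((3 : ℝ) / 2) ≤ (t - s + 1) ^ ((3 : ℝ) / 2) :=
        Real.rpow_le_rpow (by positivity) (by linarith) (by norm_num)
      have hexp : Real.exp (-(k : ℝ) ^ 2 / (2 * s)) ≤
          E * Real.exp (-(k : ℝ) ^ 2 / (4 * s)) := by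
        rw [hE, ← Real.exp_add]
        apply Real.exp_le_exp.2
        have h1 : (k : ℝ) ^ 2 / (2 * t) ≤ (k : ℝ) ^ 2 / (4 * s) := by
          apply div_le_div_of_nonneg_left (by positivity) (by linarith) (by linarith)
        have e : -(k : ℝ) ^ 2 / (2 * s) = -(k : ℝ) ^ 2 / (4 * s) + -(k : ℝ) ^ 2 / (4 * s) := by
          field_simp
          ring
        rw [e]
        have e2 : -(k : ℝ) ^ 2 / (4 * s) = -((k : ℝ) ^ 2 / (4 * s)) := by ring
        have e3 : -(k : ℝ) ^ 2 / (2 * t) = -((k : ℝ) ^ 2 / (2 * t)) := by ring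
        rw [e2, e3]
        linarith
      have core : Real.exp (-(k : ℝ) ^ 2 / (4 * s)) / s ^ ((3 : ℝ) / 2) ≤ 64 * m s := by
        rcases le_or_gt s 1 with hs1 | hs1
        · -- small s : use `exp(-u) ≤ 4/u²`
          have hmin : m s = s ^ ((1 : ℝ) / 2) :=
            min_eq_left (Real.rpow_le_rpow_of_exponent_ge hs0 hs1 (by norm_num))
          have hu : (0 : ℝ) < (k : ℝ) ^ 2 / (4 * s) := by positivity
          have hX : Real.exp (-(k : ℝ) ^ 2 / (4 * s)) ≤ 64 * s ^ (2 : ℕ) := by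
            have := exp_neg_le_aux ((k : ℝ) ^ 2 / (4 * s)) hu
            have e2 : -(k : ℝ) ^ 2 / (4 * s) = -((k : ℝ) ^ 2 / (4 * s)) := by ring
            rw [e2]
            refine this.trans ?_
            rw [div_le_iff₀ (by positivity)]
            have hk4 : (1 : ℝ) ≤ ((k : ℝ) ^ 2) ^ 2 := by nlinarith
            have : ((k : ℝ) ^ 2 / (4 * s)) ^ 2 = ((k : ℝ) ^ 2) ^ 2 / (16 * s ^ 2) := by
              field_simp; ring
            rw [this]
            rw [mul_div_assoc']
            rw [le_div_iff₀ (by positivity)]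
            nlinarith [sq_nonneg s, sq_nonneg ((k:ℝ)^2)]
          have hdiv : (64 : ℝ) * s ^ (2 : ℕ) / s ^ ((3 : ℝ) / 2) = 64 * s ^ ((1 : ℝ) / 2) := by
            rw [mul_div_assoc, ← Real.rpow_natCast s 2, ← Real.rpow_sub hs0]
            norm_num
          calc Real.exp (-(k : ℝ) ^ 2 / (4 * s)) / s ^ ((3 : ℝ) / 2)
              ≤ 64 * s ^ (2 : ℕ) / s ^ ((3 : ℝ) / 2) := by gcongr
            _ = 64 * s ^ ((1 : ℝ) / 2) := hdiv
            _ = 64 * m s := by rw [hmin]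
        · -- large s : `exp ≤ 1`
          have hmin : m s = s ^ (-(3 : ℝ) / 2) :=
            min_eq_right (Real.rpow_le_rpow_of_exponent_le hs1.le (by norm_num))
          have hX : Real.exp (-(k : ℝ) ^ 2 / (4 * s)) ≤ 1 := by
            apply Real.exp_le_one_iff.2
            have h0 : (0 : ℝ) < (k : ℝ) ^ 2 / (4 * s) := by positivity
            have e2 : -(k : ℝ) ^ 2 / (4 * s) = -((k : ℝ) ^ 2 / (4 * s)) := by ring
            rw [e2]; linarith
          calc Real.exp (-(k : ℝ) ^ 2 / (4 * s)) / s ^ ((3 : ℝ) / 2)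
              ≤ 1 / s ^ ((3 : ℝ) / 2) := by gcongr
            _ = s ^ (-(3 : ℝ) / 2) := by
                rw [one_div, neg_div, Real.rpow_neg hs0.le]
            _ = m s := hmin.symm
            _ ≤ 64 * m s := by nlinarith
      calc (k : ℝ) * Real.exp (-(k : ℝ) ^ 2 / (2 * s)) /
            ((t - s + 1) ^ ((3 : ℝ) / 2) * s ^ ((3 : ℝ) / 2))
          ≤ (k : ℝ) * (E * Real.exp (-(k : ℝ) ^ 2 / (4 * s))) /
            ((t / 2) ^ ((3 : ℝ) / 2) * s ^ ((3 : ℝ) / 2)) := by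
            gcongr
        _ = ((k : ℝ) * (t / 2) ^ (-(3 : ℝ) / 2) * E) *
            (Real.exp (-(k : ℝ) ^ 2 / (4 * s)) / s ^ ((3 : ℝ) / 2)) := by
            rw [hPinv]; field_simp
        _ ≤ M * (64 * m s) := by
            rw [hM]
            exact mul_le_mul_of_nonneg_left core (by positivity)
        _ ≤ M * (64 * m s + h s) := by nlinarith
    · -- `t/2 < s`
      have hS : (t / 2) ^ ((3 : ℝ) / 2) ≤ s ^ ((3 : ℝ) / 2) :=
        Real.rpow_le_rpow (by positivity) hcase.le (by norm_num)
      have hexp : Real.exp (-(k : ℝ) ^ 2 / (2 * s)) ≤ E := by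
        rw [hE]
        apply Real.exp_le_exp.2
        have h1 : (k : ℝ) ^ 2 / (2 * t) ≤ (k : ℝ) ^ 2 / (2 * s) := by
          apply div_le_div_of_nonneg_left (by positivity) (by linarith) (by linarith)
        have e2 : -(k : ℝ) ^ 2 / (2 * s) = -((k : ℝ) ^ 2 / (2 * s)) := by ring
        have e3 : -(k : ℝ) ^ 2 / (2 * t) = -((k : ℝ) ^ 2 / (2 * t)) := by ring
        rw [e2, e3]
        linarith
      have hApos : (0 : ℝ) < (t - s + 1) ^ ((3 : ℝ) / 2) := Real.rpow_pos_of_pos hts0 _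
      calc (k : ℝ) * Real.exp (-(k : ℝ) ^ 2 / (2 * s)) /
            ((t - s + 1) ^ ((3 : ℝ) / 2) * s ^ ((3 : ℝ) / 2))
          ≤ (k : ℝ) * E / ((t - s + 1) ^ ((3 : ℝ) / 2) * (t / 2) ^ ((3 : ℝ) / 2)) := by
            gcongr
        _ = ((k : ℝ) * (t / 2) ^ (-(3 : ℝ) / 2) * E) * ((t - s + 1) ^ ((3 : ℝ) / 2))⁻¹ := by
            rw [hPinv]; field_simp
        _ = M * h s := by
            have hhinv : h s = ((t - s + 1) ^ ((3 : ℝ) / 2))⁻¹ := by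
              simp only [hh]
              rw [show (-(3:ℝ)/2) = -((3:ℝ)/2) by norm_num, Real.rpow_neg hts0.le]
            rw [hM, hhinv]
        _ ≤ M * (64 * m s + h s) := by nlinarith
  -- nonnegativity of the integrand
  have hf_nonneg : ∀ s ∈ Set.Ioc (0 : ℝ) t,
      0 ≤ (k : ℝ) * Real.exp (-(k : ℝ) ^ 2 / (2 * s)) /
          ((t - s + 1) ^ ((3 : ℝ) / 2) * s ^ ((3 : ℝ) / 2)) := by
    rintro s ⟨hs0, hst⟩
    have : (0 : ℝ) ≤ t - s + 1 := by linarith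
    positivity
  -- compare with the dominating function
  have step1 : ∫ s in Set.Ioc (0 : ℝ) t,
      (k : ℝ) * Real.exp (-(k : ℝ) ^ 2 / (2 * s)) /
        ((t - s + 1) ^ ((3 : ℝ) / 2) * s ^ ((3 : ℝ) / 2)) ≤
      ∫ s in Set.Ioc (0 : ℝ) t, M * (64 * m s + h s) := by
    apply integral_mono_of_nonneg
    · rw [Filter.EventuallyLE, ae_restrict_iff' measurableSet_Ioc]
      exact ae_of_all _ fun s hs => hf_nonneg s hs
    · exact hint_G
    · rw [Filter.EventuallyLE, ae_restrict_iff' measurableSet_Ioc]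
      exact ae_of_all _ fun s hs => key s hs
  -- compute/estimate the dominating integral
  have hIm : ∫ s in Set.Ioc (0 : ℝ) t, m s ≤ 8 / 3 := by
    have hsplit : Set.Ioc (0 : ℝ) 1 ∪ Set.Ioc (1 : ℝ) t = Set.Ioc (0 : ℝ) t :=
      Set.Ioc_union_Ioc_eq_Ioc zero_le_one ht
    have hdisj : Disjoint (Set.Ioc (0 : ℝ) 1) (Set.Ioc (1 : ℝ) t) :=
      Set.Ioc_disjoint_Ioc.2 (by simp)
    have hm1 : IntegrableOn m (Set.Ioc (0 : ℝ) 1) :=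
      hint_m.mono_set (Set.Ioc_subset_Ioc_right ht)
    have hm2 : IntegrableOn m (Set.Ioc (1 : ℝ) t) :=
      hint_m.mono_set (Set.Ioc_subset_Ioc_left zero_le_one)
    rw [← hsplit, setIntegral_union hdisj measurableSet_Ioc hm1 hm2]
    have hg1 : IntegrableOn (fun s : ℝ => s ^ ((1 : ℝ) / 2)) (Set.Ioc (0 : ℝ) 1) := by
      refine (hboundint.mono_set (Set.Ioc_subset_Ioc_right ht)).mono'
        (by fun_prop : Measurable fun s : ℝ => s ^ ((1:ℝ)/2)).aestronglyMeasurable ?_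
      filter_upwards [ae_restrict_mem measurableSet_Ioc] with s hs
      rw [Real.norm_eq_abs, abs_of_nonneg (Real.rpow_nonneg hs.1.le _)]
      exact Real.rpow_le_one hs.1.le hs.2 (by norm_num)
    have hg2 : IntegrableOn (fun s : ℝ => s ^ (-(3 : ℝ) / 2)) (Set.Ioc (1 : ℝ) t) := by
      refine (hboundint.mono_set (Set.Ioc_subset_Ioc_left zero_le_one)).mono'
        (by fun_prop : Measurable fun s : ℝ => s ^ (-(3:ℝ)/2)).aestronglyMeasurable ?_
      filter_upwards [ae_restrict_mem measurableSet_Ioc] with s hs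
      rw [Real.norm_eq_abs, abs_of_nonneg (Real.rpow_nonneg (by linarith [hs.1]) _)]
      exact Real.rpow_le_one_of_one_le_of_nonpos hs.1.le (by norm_num)
    have e1 : ∫ s in Set.Ioc (0 : ℝ) 1, m s ≤ 2 / 3 := by
      have h1 : ∫ s in Set.Ioc (0 : ℝ) 1, m s ≤ ∫ s in Set.Ioc (0 : ℝ) 1, s ^ ((1 : ℝ) / 2) :=
        setIntegral_mono_on hm1 hg1 measurableSet_Ioc fun s hs => min_le_left _ _
      have h2 : ∫ s in Set.Ioc (0 : ℝ) 1, s ^ ((1 : ℝ) / 2) = 2 / 3 := by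
        rw [← intervalIntegral.integral_of_le zero_le_one,
          integral_rpow (Or.inl (by norm_num))]
        rw [Real.one_rpow, Real.zero_rpow (by norm_num)]
        norm_num
      linarith
    have e2 : ∫ s in Set.Ioc (1 : ℝ) t, m s ≤ 2 := by
      have h1 : ∫ s in Set.Ioc (1 : ℝ) t, m s ≤ ∫ s in Set.Ioc (1 : ℝ) t, s ^ (-(3 : ℝ) / 2) :=
        setIntegral_mono_on hm2 hg2 measurableSet_Ioc fun s hs => min_le_right _ _
      have h2 : ∫ s in Set.Ioc (1 : ℝ) t, s ^ (-(3 : ℝ) / 2) =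
          (t ^ (-(3 : ℝ) / 2 + 1) - 1 ^ (-(3 : ℝ) / 2 + 1)) / (-(3 : ℝ) / 2 + 1) := by
        rw [← intervalIntegral.integral_of_le ht,
          integral_rpow (Or.inr ⟨by norm_num, by
            rw [Set.uIcc_of_le ht]
            rintro ⟨h01, -⟩
            norm_num at h01⟩)]
      have h3 : (0 : ℝ) ≤ t ^ (-(3 : ℝ) / 2 + 1) := Real.rpow_nonneg ht0.le _
      refine h1.trans ?_
      rw [h2, Real.one_rpow, div_le_iff_of_neg (by norm_num)]
      linarith
    linarith
  have hIh : ∫ s in Set.Ioc (0 : ℝ) t, h s ≤ 2 := by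
    have e0 : ∫ s in Set.Ioc (0 : ℝ) t, h s = ∫ s in (0:ℝ)..t, (t + 1 - s) ^ (-(3 : ℝ) / 2) := by
      rw [← intervalIntegral.integral_of_le ht0.le]
      apply intervalIntegral.integral_congr
      intro s _
      simp only [hh]
      congr 1
      ring
    have e1 : ∫ s in (0:ℝ)..t, (t + 1 - s) ^ (-(3 : ℝ) / 2) =
        ∫ u in (1:ℝ)..(t + 1), u ^ (-(3 : ℝ) / 2) := by
      have := intervalIntegral.integral_comp_sub_left
        (a := 0) (b := t) (fun u : ℝ => u ^ (-(3 : ℝ) / 2)) (t + 1)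
      simpa using this
    have h2 : ∫ u in (1:ℝ)..(t + 1), u ^ (-(3 : ℝ) / 2) =
        ((t + 1) ^ (-(3 : ℝ) / 2 + 1) - 1 ^ (-(3 : ℝ) / 2 + 1)) / (-(3 : ℝ) / 2 + 1) := by
      rw [integral_rpow (Or.inr ⟨by norm_num, by
        rw [Set.uIcc_of_le (by linarith)]
        rintro ⟨h01, -⟩
        norm_num at h01⟩)]
    have h3 : (0 : ℝ) ≤ (t + 1) ^ (-(3 : ℝ) / 2 + 1) := Real.rpow_nonneg (by linarith) _
    rw [e0, e1, h2, Real.one_rpow]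
    rw [div_le_iff_of_neg (by norm_num)]
    linarith
  have step2 : ∫ s in Set.Ioc (0 : ℝ) t, M * (64 * m s + h s) ≤ M * (518 / 3) := by
    have e : ∫ s in Set.Ioc (0 : ℝ) t, M * (64 * m s + h s) =
        M * (64 * (∫ s in Set.Ioc (0 : ℝ) t, m s) + ∫ s in Set.Ioc (0 : ℝ) t, h s) := by
      rw [integral_const_mul, integral_add (hint_m.const_mul 64) hint_h,
        integral_const_mul]
    rw [e]
    apply mul_le_mul_of_nonneg_left _ hM0.le
    linarith
  -- final arithmetic
  have h8 : ((2 : ℝ) ^ ((3 : ℝ) / 2)) ^ (2 : ℕ) = 8 := by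
    rw [← Real.rpow_natCast ((2 : ℝ) ^ ((3 : ℝ) / 2)) 2, ← Real.rpow_mul (by norm_num)]
    norm_num
  have h23 : (2 : ℝ) ^ ((3 : ℝ) / 2) ≤ 3 := by
    nlinarith [Real.rpow_nonneg (by norm_num : (0 : ℝ) ≤ 2) ((3 : ℝ) / 2)]
  have h23pos : (0 : ℝ) < (2 : ℝ) ^ ((3 : ℝ) / 2) := Real.rpow_pos_of_pos (by norm_num) _
  have hhalf : (t / 2) ^ (-(3 : ℝ) / 2) ≤ 3 * t ^ (-(3 : ℝ) / 2) := by
    rw [Real.div_rpow ht0.le (by norm_num)]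
    have h2a : (2 : ℝ) ^ (-(3 : ℝ) / 2) = ((2 : ℝ) ^ ((3 : ℝ) / 2))⁻¹ := by
      rw [neg_div, Real.rpow_neg (by norm_num)]
    have htp : (0 : ℝ) ≤ t ^ (-(3 : ℝ) / 2) := Real.rpow_nonneg ht0.le _
    rw [h2a, div_eq_mul_inv, inv_inv, mul_comm]
    exact mul_le_mul_of_nonneg_right h23 htp
  have htpos : (0 : ℝ) < t ^ (-(3 : ℝ) / 2) := Real.rpow_pos_of_pos ht0 _
  have step3 : M * (518 / 3) ≤ 600 * (k : ℝ) * t ^ (-(3 : ℝ) / 2) * E := by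
    rw [hM]
    calc (k : ℝ) * (t / 2) ^ (-(3 : ℝ) / 2) * E * (518 / 3)
        ≤ (k : ℝ) * (3 * t ^ (-(3 : ℝ) / 2)) * E * (518 / 3) := by
          apply mul_le_mul_of_nonneg_right _ (by norm_num)
          apply mul_le_mul_of_nonneg_right _ hE0.le
          exact mul_le_mul_of_nonneg_left hhalf hK0.le
      _ = 518 * (k : ℝ) * t ^ (-(3 : ℝ) / 2) * E := by ring
      _ ≤ 600 * (k : ℝ) * t ^ (-(3 : ℝ) / 2) * E := by
          have : (0 : ℝ) ≤ (k : ℝ) * t ^ (-(3 : ℝ) / 2) * E := by positivity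
          nlinarith
  linarith
end

section
/- For p, q ∈ (0,1), the integral ∫_p^∞ u e^{−u}(1+(1−p)e^{−u}) / ((1−(1−p)e^{−u})(1−(1−pq)e^{−u})²) du is at most C/p for an absolute constant C, using the bound 1 − (1−r)e^{−u} ≥ (1−e^{−1}) min(u,1) for r ∈ {p, pq}. -/
open MeasureTheory

/-- `1 - e^{-u} ≥ min(u,1)/2` for `u ≥ 0`. -/
lemma aux_one_sub_exp (u : ℝ) (hu : 0 ≤ u) :
    min u 1 / 2 ≤ 1 - Real.exp (-u) := by
  have he : Real.exp (-1) ≤ 1 / 2 := by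
    have h2 : (2 : ℝ) ≤ Real.exp 1 := by nlinarith [Real.add_one_le_exp (1 : ℝ)]
    rw [Real.exp_neg]
    rw [show (1 : ℝ) / 2 = 2⁻¹ by norm_num]
    exact inv_anti₀ (by norm_num) h2
  rcases le_total u 1 with h | h
  · rw [min_eq_left h]
    have hconv := convexOn_exp.2 (Set.mem_univ (0 : ℝ)) (Set.mem_univ (-1 : ℝ))
      (show (0:ℝ) ≤ 1 - u by linarith) hu (by ring)
    simp only [smul_eq_mul, mul_zero, zero_add, mul_neg_one, Real.exp_zero] at hconv
    nlinarith
  · rw [min_eq_right h]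
    have : Real.exp (-u) ≤ Real.exp (-1) := by
      apply Real.exp_le_exp.2; linarith
    linarith

/-- Denominator bound. -/
lemma aux_denom (r u : ℝ) (hr0 : 0 ≤ r) (hr1 : r ≤ 1) (hu : 0 ≤ u) :
    min u 1 / 2 ≤ 1 - (1 - r) * Real.exp (-u) := by
  have h1 := aux_one_sub_exp u hu
  have hE : 0 < Real.exp (-u) := Real.exp_pos _
  nlinarith

/-- `u³ ≤ 27 e^u` for `u ≥ 0`. -/
lemma aux_cube (u : ℝ) (hu : 0 ≤ u) : u ^ 3 ≤ 27 * Real.exp u := by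
  have h := Real.add_one_le_exp (u / 3)
  have h3 : (1 + u / 3) ^ 3 ≤ Real.exp (u / 3) ^ 3 := by
    apply pow_le_pow_left₀ (by positivity) (by linarith)
  have hexp : Real.exp (u / 3) ^ 3 = Real.exp u := by
    rw [← Real.exp_nat_mul]; ring_nf
  nlinarith [sq_nonneg u, sq_nonneg (u/3)]

set_option maxHeartbeats 1000000 in
/-- Pointwise bound. -/
lemma aux_pointwise (p q u : ℝ) (hp0 : 0 < p) (hp1 : p < 1) (hq0 : 0 < q) (hq1 : q < 1)
    (hup : p < u) :
    0 ≤ u * Real.exp (-u) * (1 + (1 - p) * Real.exp (-u)) /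
        ((1 - (1 - p) * Real.exp (-u)) * (1 - (1 - p * q) * Real.exp (-u)) ^ 2) ∧
      u * Real.exp (-u) * (1 + (1 - p) * Real.exp (-u)) /
        ((1 - (1 - p) * Real.exp (-u)) * (1 - (1 - p * q) * Real.exp (-u)) ^ 2) ≤
        432 * u ^ (-2 : ℝ) := by
  have hu0 : (0 : ℝ) < u := lt_trans hp0 hup
  set E := Real.exp (-u) with hE
  have hE0 : 0 < E := Real.exp_pos _
  have hE1 : E ≤ 1 := Real.exp_le_one_iff.2 (by linarith)
  set m := min u 1 with hm
  have hm0 : 0 < m := lt_min hu0 one_pos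
  have hm1 : m ≤ 1 := min_le_right _ _
  have hmu : m ≤ u := min_le_left _ _
  have hD1 : m / 2 ≤ 1 - (1 - p) * E := by
    rw [hm, hE]; exact aux_denom p u (le_of_lt hp0) (le_of_lt hp1) (le_of_lt hu0)
  have hpq0 : 0 < p * q := mul_pos hp0 hq0
  have hpq1 : p * q ≤ 1 := by nlinarith
  have hD2 : m / 2 ≤ 1 - (1 - p * q) * E := by
    rw [hm, hE]; exact aux_denom (p * q) u (le_of_lt hpq0) hpq1 (le_of_lt hu0)
  clear_value E m
  have hD1' : 0 < 1 - (1 - p) * E := lt_of_lt_of_le (by positivity) hD1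
  have hD2' : 0 < 1 - (1 - p * q) * E := lt_of_lt_of_le (by positivity) hD2
  have hDpos : 0 < (1 - (1 - p) * E) * (1 - (1 - p * q) * E) ^ 2 := by positivity
  have hDge : m ^ 3 / 8 ≤ (1 - (1 - p) * E) * (1 - (1 - p * q) * E) ^ 2 := by
    calc m ^ 3 / 8 = (m / 2) * (m / 2) ^ 2 := by ring
      _ ≤ (1 - (1 - p) * E) * (1 - (1 - p * q) * E) ^ 2 := by
          apply mul_le_mul hD1 (by nlinarith) (by positivity) (le_of_lt hD1')
  have h1pE : 0 ≤ (1 - p) * E := mul_nonneg (by linarith) hE0.le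
  have h1pE1 : (1 - p) * E ≤ 1 := by nlinarith
  have hN : u * E * (1 + (1 - p) * E) ≤ 2 * (u * E) := by
    nlinarith [mul_nonneg hu0.le hE0.le]
  have hN0 : 0 ≤ u * E * (1 + (1 - p) * E) :=
    mul_nonneg (mul_nonneg hu0.le hE0.le) (by linarith)
  refine ⟨div_nonneg hN0 hDpos.le, ?_⟩
  have step1 : u * E * (1 + (1 - p) * E) /
      ((1 - (1 - p) * E) * (1 - (1 - p * q) * E) ^ 2) ≤ 2 * (u * E) / (m ^ 3 / 8) :=
    div_le_div₀ (by positivity) hN (by positivity) hDge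
  have hrpow : u ^ (-2 : ℝ) = 1 / u ^ 2 := by
    have h2 : u ^ (2 : ℝ) = u ^ (2 : ℕ) := by
      rw [← Real.rpow_natCast]; norm_num
    rw [Real.rpow_neg hu0.le, h2, one_div]
  have key : 2 * (u * E) / (m ^ 3 / 8) ≤ 432 * (1 / u ^ 2) := by
    rw [mul_one_div, div_le_div_iff₀ (by positivity) (by positivity)]
    rcases le_total u 1 with h | h
    · have hmu' : m = u := by rw [hm]; exact min_eq_left h
      rw [hmu']
      nlinarith [mul_nonneg (pow_pos hu0 3).le (show (0:ℝ) ≤ 1 - E by linarith)]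
    · have hmu' : m = 1 := by rw [hm]; exact min_eq_right h
      rw [hmu']
      have h27 : u ^ 3 ≤ 27 * Real.exp u := aux_cube u (by linarith)
      have hEe : E * Real.exp u = 1 := by
        rw [hE, ← Real.exp_add]; simp
      nlinarith [mul_le_mul_of_nonneg_right h27 hE0.le, Real.exp_pos u]
  rw [hrpow]
  linarith

set_option maxHeartbeats 1000000 in
/-- For `p, q ∈ (0,1)`,
`∫_p^∞ u e^{−u}(1+(1−p)e^{−u}) / ((1−(1−p)e^{−u})(1−(1−pq)e^{−u})²) du ≤ C/p`
for an absolute constant `C`. -/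
theorem stmt17 :
    ∃ C : ℝ, 0 < C ∧ ∀ p q : ℝ, p ∈ Set.Ioo (0 : ℝ) 1 → q ∈ Set.Ioo (0 : ℝ) 1 →
      ∫ u in Set.Ioi p,
        u * Real.exp (-u) * (1 + (1 - p) * Real.exp (-u)) /
          ((1 - (1 - p) * Real.exp (-u)) * (1 - (1 - p * q) * Real.exp (-u)) ^ 2) ≤
        C / p := by
  refine ⟨432, by norm_num, ?_⟩
  rintro p q ⟨hp0, hp1⟩ ⟨hq0, hq1⟩
  set f : ℝ → ℝ := fun u =>
    u * Real.exp (-u) * (1 + (1 - p) * Real.exp (-u)) /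
      ((1 - (1 - p) * Real.exp (-u)) * (1 - (1 - p * q) * Real.exp (-u)) ^ 2) with hf
  have hg_int : IntegrableOn (fun u : ℝ => 432 * u ^ (-2 : ℝ)) (Set.Ioi p) :=
    (integrableOn_Ioi_rpow_of_lt (by norm_num) hp0).const_mul 432
  have hg_val : ∫ u in Set.Ioi p, 432 * u ^ (-2 : ℝ) = 432 / p := by
    rw [MeasureTheory.integral_const_mul, integral_Ioi_rpow_of_lt (by norm_num) hp0]
    norm_num
    rw [Real.rpow_neg_one]
    field_simp
  have hbound : ∀ u ∈ Set.Ioi p, 0 ≤ f u ∧ f u ≤ 432 * u ^ (-2 : ℝ) := fun u hu =>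
    aux_pointwise p q u hp0 hp1 hq0 hq1 hu
  rw [← hg_val]
  by_cases hint : IntegrableOn f (Set.Ioi p)
  · exact setIntegral_mono_on hint hg_int measurableSet_Ioi (fun u hu => (hbound u hu).2)
  · rw [hf] at hint ⊢
    rw [MeasureTheory.integral_undef hint]
    apply setIntegral_nonneg measurableSet_Ioi
    intro u hu
    exact mul_nonneg (by norm_num) (Real.rpow_nonneg (le_of_lt (lt_trans hp0 hu)) _)
end
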